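/- arXiv:1202.3877 — 12 statements merged into one kernel-verified Lean document; each statement's English description precedes it below -/
import Mathlib

section
/- Let G be a finite group, A a cyclic subgroup of G containing the commutator subgroup G', and N a non-trivial p-subgroup of A for some prime p. Then the centralizer C_G(N) has a normal p-complement, i.e. a normal subgroup of order coprime to p whose index is a power of p. -/
/-!
Let `Q` be the Sylow `p`-subgroup of the cyclic group `A`. It is cyclic, normal in `G`, contains
`N`, and lies in `C = C_G(N)`. An element of `C` of order prime to `p` acts on `Q = ⟨q⟩` by
`q ↦ q ^ c` and fixes the non-trivial elements of `N`, so `c ≡ 1 (mod p)`. The residues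
`≡ 1 (mod p)` form a `p`-group in `(ℤ/p^e)ˣ`, so `c ≡ 1 (mod p^e)`: the `p'`-elements of `C`
centralize `Q`.

Modulo `Q` the derived subgroup `C' ≤ A` is a `p'`-group, so a Sylow `p`-subgroup of `C/Q` is
centralized by its normalizer, and Burnside's transfer theorem gives `C/Q` a normal
`p`-complement. In its preimage `T`, `Q` is a central Sylow `p`-subgroup, so Burnside applies
again. The resulting complement is exactly the set of `p'`-elements of `C`, hence normal in `C`.
-/

open scoped commutatorElement

namespace Int

lemma prime_dvd_sub_one_of_mul_modEq {p e : ℕ} (hp : p.Prime) {c t : ℤ}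
    (hct : c * t ≡ t [ZMOD ↑(p ^ e)]) (ht : ¬ t ≡ 0 [ZMOD ↑(p ^ e)]) : (p : ℤ) ∣ c - 1 := by
  by_contra h
  have hcop : IsCoprime ((p : ℤ) ^ e) (c - 1) :=
    ((Nat.prime_iff_prime_int.mp hp).coprime_iff_not_dvd.mpr h).pow_left
  refine ht (Int.modEq_zero_iff_dvd.mpr ?_)
  have hdvd : (p : ℤ) ^ e ∣ (c - 1) * t := by
    have := Int.modEq_iff_dvd.mp hct.symm
    push_cast at this
    rwa [sub_one_mul]
  push_cast
  exact hcop.dvd_of_dvd_mul_left hdvd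

lemma modEq_one_of_pow_modEq_one {p e n : ℕ} {c : ℤ} (hc : (p : ℤ) ∣ c - 1)
    (hn : n.Coprime p) (hcn : c ^ n ≡ 1 [ZMOD ↑(p ^ e)]) : c ≡ 1 [ZMOD ↑(p ^ e)] := by
  have hpe : c ^ p ^ (e - 1) ≡ 1 [ZMOD ↑(p ^ e)] := by
    refine (Int.modEq_iff_dvd.mpr ?_).symm
    have := dvd_sub_pow_of_dvd_sub (a := c) (b := 1) hc (e - 1)
    rw [one_pow] at this
    push_cast
    exact (pow_dvd_pow _ (by omega)).trans this
  rw [← ZMod.intCast_eq_intCast_iff] at hpe hcn ⊢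
  push_cast at hpe hcn ⊢
  have := pow_gcd_eq_one.mpr ⟨hpe, hcn⟩
  rwa [Nat.Coprime.gcd_eq_one (hn.symm.pow_left _), pow_one] at this

end Int

section PPart

variable {M : Type*} [Monoid M] {p : ℕ}

lemma eq_one_of_pow_pow_eq_one_of_coprime {g : M} {k : ℕ} (hg : g ^ p ^ k = 1)
    (hco : (orderOf g).Coprime p) : g = 1 :=
  (pow_eq_one_iff_of_coprime (hco.pow_right k).symm).mp ⟨hg, pow_orderOf_eq_one g⟩

lemma pow_ordCompl_pow_ordProj_eq_one (g : M) :
    (g ^ ordCompl[p] (orderOf g)) ^ ordProj[p] (orderOf g) = 1 := by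
  rw [← pow_mul, mul_comm, Nat.ordProj_mul_ordCompl_eq_self, pow_orderOf_eq_one]

variable {H : Type*} [Group H]

lemma Subgroup.mem_of_pow_mem_of_coprime {S : Subgroup H} {g : H} {a b : ℕ} (hab : a.Coprime b)
    (ha : g ^ a ∈ S) (hb : g ^ b ∈ S) : g ∈ S := by
  have hg : g = (g ^ a) ^ a.gcdA b * (g ^ b) ^ a.gcdB b := by
    rw [← zpow_natCast, ← zpow_natCast, ← zpow_mul, ← zpow_mul, ← zpow_add, ← Nat.gcd_eq_gcd_ab,
      hab, Nat.cast_one, zpow_one]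
  rw [hg]
  exact mul_mem (zpow_mem ha _) (zpow_mem hb _)

variable [Finite H] [hp : Fact p.Prime]

lemma coprime_orderOf_pow_ordProj (g : H) :
    (orderOf (g ^ ordProj[p] (orderOf g))).Coprime p := by
  rw [orderOf_pow_of_dvd (pow_ne_zero _ hp.out.ne_zero) (Nat.ordProj_dvd _ _)]
  exact (Nat.coprime_ordCompl hp.out (orderOf_pos g).ne').symm

lemma Subgroup.mem_of_pow_ordProj_mem_of_pow_ordCompl_mem {S : Subgroup H} {g : H}
    (h₁ : g ^ ordProj[p] (orderOf g) ∈ S) (h₂ : g ^ ordCompl[p] (orderOf g) ∈ S) : g ∈ S :=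
  mem_of_pow_mem_of_coprime ((Nat.coprime_ordCompl hp.out (orderOf_pos g).ne').pow_left _) h₁ h₂

end PPart

section CyclicPGroup

variable {G : Type*} [Group G] {p : ℕ}

lemma conj_pow_eq_zpow_pow {g q : G} {c : ℤ} (hc : g * q * g⁻¹ = q ^ c) (n : ℕ) :
    g ^ n * q * (g ^ n)⁻¹ = q ^ c ^ n := by
  induction n with
  | zero => simp
  | succ n ih =>
    rw [pow_succ', mul_inv_rev, show g * g ^ n * q * ((g ^ n)⁻¹ * g⁻¹)
      = g * (g ^ n * q * (g ^ n)⁻¹) * g⁻¹ by group, ih, ← conj_zpow, hc, ← zpow_mul, pow_succ']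

lemma commute_of_conj_eq_zpow (hp : p.Prime) {g q : G} {e : ℕ} {c t : ℤ}
    (hq : orderOf q = p ^ e) (hg : (orderOf g).Coprime p) (hc : g * q * g⁻¹ = q ^ c)
    (ht : q ^ t ≠ 1) (hgt : Commute g (q ^ t)) : Commute g q := by
  have hcn : c ^ orderOf g ≡ 1 [ZMOD ↑(p ^ e)] := by
    rw [← hq, ← zpow_eq_zpow_iff_modEq, ← conj_pow_eq_zpow_pow hc, pow_orderOf_eq_one]
    simp
  have hct : c * t ≡ t [ZMOD ↑(p ^ e)] := by
    rw [← hq, ← zpow_eq_zpow_iff_modEq, zpow_mul, ← hc, conj_zpow, hgt.eq, mul_inv_cancel_right]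
  have ht' : ¬ t ≡ 0 [ZMOD ↑(p ^ e)] := by
    rwa [← hq, ← zpow_eq_zpow_iff_modEq, zpow_zero]
  have hc1 :=
    Int.modEq_one_of_pow_modEq_one (Int.prime_dvd_sub_one_of_mul_modEq hp hct ht') hg hcn
  rw [← hq, ← zpow_eq_zpow_iff_modEq, zpow_one] at hc1
  exact mul_inv_eq_iff_eq_mul.mp (hc.trans hc1)

lemma mem_centralizer_of_commute_of_isCyclic [Fact p.Prime] {Q : Subgroup G} [IsCyclic Q]
    (hQ : IsPGroup p Q) {g x : G} (hg : (orderOf g).Coprime p)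
    (hgQ : g ∈ Subgroup.normalizer (Q : Set G)) (hxQ : x ∈ Q) (hx : x ≠ 1)
    (hgx : Commute g x) : g ∈ Subgroup.centralizer (Q : Set G) := by
  obtain ⟨q, rfl⟩ := (Subgroup.isCyclic_iff_exists_zpowers_eq_top Q).mp ‹_›
  obtain ⟨e, hq⟩ := IsPGroup.iff_orderOf.mp hQ ⟨q, Subgroup.mem_zpowers q⟩
  rw [Subgroup.orderOf_mk] at hq
  obtain ⟨c, hc⟩ := Subgroup.mem_zpowers_iff.mp
    ((Subgroup.mem_normalizer_iff.mp hgQ q).mp (Subgroup.mem_zpowers q))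
  obtain ⟨t, rfl⟩ := Subgroup.mem_zpowers_iff.mp hxQ
  have hgq := commute_of_conj_eq_zpow Fact.out hq hg hc.symm hx hgx
  rw [Subgroup.mem_centralizer_iff]
  rintro _ ⟨i, rfl⟩
  exact (hgq.zpow_right i).eq.symm

lemma Subgroup.exists_primaryComponent (A : Subgroup G) [A.Normal] [IsMulCommutative A]
    [Finite A] (p : ℕ) [Fact p.Prime] :
    ∃ Q : Subgroup G, Q.Normal ∧ Q ≤ A ∧ IsPGroup p Q ∧
      ∀ a ∈ A, (∃ k, a ^ p ^ k = 1) → a ∈ Q := by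
  obtain ⟨P⟩ : Nonempty (Sylow p A) := inferInstance
  have hmem : ∀ a ∈ A, (∃ k, a ^ p ^ k = 1) → a ∈ P.map A.subtype := fun a ha ⟨k, hk⟩ ↦ by
    have : IsPGroup p (zpowers (⟨a, ha⟩ : A)) := IsPGroup.of_card_dvd_pow (n := k) <| by
      rw [Nat.card_zpowers]
      exact orderOf_dvd_of_pow_eq_one (Subtype.ext hk)
    exact ⟨_, this.le_sylow_of_normal P (mem_zpowers _), rfl⟩
  refine ⟨P.map A.subtype, ⟨fun q hq g ↦ ?_⟩, map_subtype_le _, P.isPGroup'.map _, hmem⟩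
  obtain ⟨k, hk⟩ := (P.isPGroup'.map A.subtype) ⟨q, hq⟩
  refine hmem _ (Normal.conj_mem ‹_› q (map_subtype_le _ hq) g) ⟨k, ?_⟩
  rw [conj_pow, show q ^ p ^ k = 1 from congrArg Subtype.val hk, mul_one, mul_inv_cancel]

end CyclicPGroup

namespace Subgroup

variable {H : Type*} [Group H] {p : ℕ}

def IsNormalPComplement (p : ℕ) (K : Subgroup H) : Prop :=
  K.Normal ∧ (Nat.card K).Coprime p ∧ ∃ n : ℕ, K.index = p ^ n

lemma IsNormalPComplement.mem_iff {K : Subgroup H} (hK : K.IsNormalPComplement p) {g : H} :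
    g ∈ K ↔ (orderOf g).Coprime p := by
  obtain ⟨_, hcard, n, hn⟩ := hK
  refine ⟨fun hg ↦ hcard.coprime_dvd_left (orderOf_dvd_natCard K hg), fun hg ↦ ?_⟩
  rw [← QuotientGroup.eq_one_iff]
  refine eq_one_of_pow_pow_eq_one_of_coprime (k := n) ?_
    (hg.coprime_dvd_left (orderOf_map_dvd (QuotientGroup.mk' K) g))
  rw [← hn, index_eq_card]
  exact pow_card_eq_one'

variable [Finite H] [hp : Fact p.Prime]

lemma isNormalPComplement_of_forall_mem_iff {K : Subgroup H}
    (hK : ∀ g, g ∈ K ↔ (orderOf g).Coprime p) : K.IsNormalPComplement p := by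
  have hKn : K.Normal := ⟨fun g hg x ↦ by
    rw [hK, ← MulAut.conj_apply, MulEquiv.orderOf_eq]
    exact (hK g).mp hg⟩
  refine ⟨hKn, ?_, ?_⟩
  · refine Nat.coprime_comm.mp ((Nat.Prime.coprime_iff_not_dvd hp.out).mpr fun hdvd ↦ ?_)
    obtain ⟨x, hx⟩ := exists_prime_orderOf_dvd_card' p hdvd
    have := (hK x).mp x.2
    rw [orderOf_coe, hx] at this
    exact hp.out.one_lt.ne' ((Nat.coprime_self p).mp this)
  · have : IsPGroup p (H ⧸ K) := fun z ↦ by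
      obtain ⟨g, rfl⟩ := QuotientGroup.mk_surjective z
      refine ⟨(orderOf g).factorization p, ?_⟩
      rw [← QuotientGroup.mk_pow, QuotientGroup.eq_one_iff, hK]
      exact coprime_orderOf_pow_ordProj g
    obtain ⟨n, hn⟩ := this.exists_card_eq
    exact ⟨n, by rw [index_eq_card, hn]⟩

lemma exists_isNormalPComplement_of_normalizer_le_centralizer (P : Sylow p H)
    (hP : normalizer (P : Set H) ≤ centralizer (P : Set H)) :
    ∃ K : Subgroup H, K.IsNormalPComplement p := by
  have hK := MonoidHom.ker_transferSylow_isComplement' P hP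
  obtain ⟨n, hn⟩ := P.isPGroup'.exists_card_eq
  refine ⟨(MonoidHom.transferSylow P hP).ker, inferInstance, ?_, n,
    by rw [hK.symm.index_eq_card, hn]⟩
  exact Nat.coprime_comm.mp ((Nat.Prime.coprime_iff_not_dvd hp.out).mpr
    (MonoidHom.not_dvd_card_ker_transferSylow P hP))

lemma exists_isNormalPComplement_of_coprime_orderOf_commutator
    (h : ∀ z ∈ _root_.commutator H, (orderOf z).Coprime p) :
    ∃ K : Subgroup H, K.IsNormalPComplement p := by
  obtain ⟨P⟩ : Nonempty (Sylow p H) := inferInstance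
  refine exists_isNormalPComplement_of_normalizer_le_centralizer P fun g hg ↦ ?_
  rw [mem_centralizer_iff]
  intro x hx
  have hxP : ⁅g, x⁆ ∈ P := mul_mem ((mem_normalizer_iff.mp hg x).mp hx) (inv_mem hx)
  obtain ⟨k, hk⟩ := P.isPGroup' ⟨_, hxP⟩
  have : ⁅g, x⁆ = 1 := eq_one_of_pow_pow_eq_one_of_coprime (k := k) (congrArg Subtype.val hk)
    (h _ (commutator_mem_commutator (mem_top g) (mem_top x)))
  exact (commutatorElement_eq_one_iff_mul_comm.mp this).symm

lemma exists_isNormalPComplement_quotient_of_commutator_le {Q B : Subgroup H} [Q.Normal]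
    (hB : _root_.commutator H ≤ B) (hBQ : ∀ b ∈ B, (∃ k, b ^ p ^ k = 1) → b ∈ Q) :
    ∃ K : Subgroup (H ⧸ Q), K.IsNormalPComplement p := by
  refine exists_isNormalPComplement_of_coprime_orderOf_commutator fun z hz ↦ ?_
  have hmap : _root_.commutator (H ⧸ Q) = (_root_.commutator H).map (QuotientGroup.mk' Q) := by
    rw [map_commutator_eq, MonoidHom.range_eq_top.mpr (QuotientGroup.mk'_surjective Q),
      _root_.commutator_def]
  obtain ⟨b, hb, rfl⟩ := hmap ▸ hz
  refine (Nat.coprime_ordCompl hp.out (orderOf_pos b).ne').symm.coprime_dvd_left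
    (orderOf_dvd_of_pow_eq_one ?_)
  rw [QuotientGroup.mk'_apply, ← QuotientGroup.mk_pow, QuotientGroup.eq_one_iff]
  exact hBQ _ (B.pow_mem (hB hb) _) ⟨_, pow_ordCompl_pow_ordProj_eq_one b⟩

lemma exists_isNormalPComplement_of_quotient {Q : Subgroup H} [Q.Normal] [IsMulCommutative Q]
    (hQ : IsPGroup p Q) (hcent : ∀ g : H, (orderOf g).Coprime p → g ∈ centralizer (Q : Set H))
    (hK : ∃ K : Subgroup (H ⧸ Q), K.IsNormalPComplement p) :
    ∃ L : Subgroup H, L.IsNormalPComplement p := by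
  obtain ⟨K, hK⟩ := hK
  set T := K.comap (QuotientGroup.mk' Q)
  have hQT : Q ≤ T := by
    rw [← QuotientGroup.ker_mk' Q]
    exact MonoidHom.ker_le_comap _ K
  have hTcent : ∀ g ∈ T, g ∈ centralizer (Q : Set H) := fun g hg ↦ by
    refine mem_of_pow_ordProj_mem_of_pow_ordCompl_mem (hcent _ (coprime_orderOf_pow_ordProj g)) ?_
    suffices g ^ ordCompl[p] (orderOf g) ∈ Q from
      le_centralizer_iff_isMulCommutative.mpr ‹_› this
    rw [← QuotientGroup.eq_one_iff, QuotientGroup.mk_pow]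
    refine eq_one_of_pow_pow_eq_one_of_coprime (k := (orderOf g).factorization p) ?_
      (hK.mem_iff.mp (K.pow_mem hg _))
    rw [← QuotientGroup.mk_pow, ← QuotientGroup.mk_pow, pow_ordCompl_pow_ordProj_eq_one,
      QuotientGroup.mk_one]
  have hindex : Q.relIndex T = Nat.card K := by
    have h := relIndex_mul_index hQT
    rw [index_comap_of_surjective K (QuotientGroup.mk'_surjective Q), Q.index_eq_card,
      ← card_mul_index K] at h
    exact Nat.eq_of_mul_eq_mul_right (Nat.pos_of_ne_zero K.index_ne_zero_of_finite) h
  let P : Sylow p T := (hQ.comap_subtype (K := T)).toSylow <| by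
    change ¬ p ∣ Q.relIndex T
    rw [hindex, ← Nat.Prime.coprime_iff_not_dvd hp.out, Nat.coprime_comm]
    exact hK.2.1
  obtain ⟨L, hL⟩ := exists_isNormalPComplement_of_normalizer_le_centralizer P fun g _ ↦ by
    rw [mem_centralizer_iff]
    exact fun x hx ↦ Subtype.ext (hTcent g g.2 x hx)
  refine ⟨L.map T.subtype, isNormalPComplement_of_forall_mem_iff fun g ↦ ⟨?_, fun hg ↦ ?_⟩⟩
  · rintro ⟨x, hx, rfl⟩
    rw [coe_subtype, orderOf_coe]
    exact hL.mem_iff.mp hx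
  · have hgT : g ∈ T := hK.mem_iff.mpr (hg.coprime_dvd_left (orderOf_map_dvd _ g))
    exact ⟨⟨g, hgT⟩, hL.mem_iff.mpr (by rwa [orderOf_mk]), rfl⟩

end Subgroup

/-- Lemma (pComplemento): Let `A` be a cyclic subgroup of a finite group `G` containing the
commutator subgroup `G'`, and let `N` be a non-trivial `p`-subgroup of `A`. Then the
centralizer `C_G(N)` has a normal `p`-complement. -/
theorem stmt0 {G : Type*} [Group G] [Finite G] (A N : Subgroup G)
    (hA : IsCyclic A) (hGA : commutator G ≤ A) (p : ℕ) (hp : p.Prime)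
    (hNA : N ≤ A) (hNbot : N ≠ ⊥) (hNp : IsPGroup p N) :
    ∃ K : Subgroup (Subgroup.centralizer (N : Set G)), K.Normal ∧
      (Nat.card K).Coprime p ∧ ∃ n : ℕ, K.index = p ^ n := by
  have := Fact.mk hp
  have : A.Normal := .of_commutator_le (G := G) hGA
  obtain ⟨Q, hQn, hQA, hQp, hQmem⟩ := A.exists_primaryComponent p
  have : IsCyclic Q := Subgroup.isCyclic_of_le hQA
  obtain ⟨x, hxN, hx⟩ := N.bot_or_exists_ne_one.resolve_left hNbot
  have hxQ : x ∈ Q := hQmem x (hNA hxN) <|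
    let ⟨k, hk⟩ := hNp ⟨x, hxN⟩; ⟨k, congrArg Subtype.val hk⟩
  refine Subgroup.exists_isNormalPComplement_of_quotient (Q := Q.subgroupOf _) hQp.comap_subtype
    (fun g hg ↦ ?_) (Subgroup.exists_isNormalPComplement_quotient_of_commutator_le
      (B := A.subgroupOf _) ?_ fun b hb ⟨k, hk⟩ ↦ hQmem b hb ⟨k, congrArg Subtype.val hk⟩)
  · have hgQ := mem_centralizer_of_commute_of_isCyclic hQp (g := g)
      (by rwa [Subgroup.orderOf_coe]) (by rw [Subgroup.normalizer_eq_top]; trivial) hxQ hx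
      (g.2 x hxN).symm
    rw [Subgroup.mem_centralizer_iff]
    exact fun y hy ↦ Subtype.ext (hgQ y hy)
  · rw [Subgroup.subgroupOf, ← Subgroup.map_le_iff_le_comap, map_commutator_eq]
    exact (Subgroup.commutator_mono le_top le_top).trans hGA
end

section
/- Let G be a finite group, A a cyclic subgroup containing G', and H a subgroup of G that contains a non-trivial normal subgroup of G and satisfies H ∩ Z(G) = 1. Then A ∩ H ≠ 1. -/
namespace Subgroup

theorem le_center_of_commutator_inf_eq_bot {G : Type*} [Group G] {N : Subgroup G} [N.Normal]
    (h : _root_.commutator G ⊓ N = ⊥) : N ≤ center G := by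
  rw [← commutator_top_right_eq_bot_iff_le_center, eq_bot_iff, ← h, _root_.commutator_def]
  exact le_inf (commutator_mono le_top le_rfl) (commutator_le_left _ _)

end Subgroup

theorem stmt2_general {G : Type*} [Group G] (A H : Subgroup G)
    (hGA : commutator G ≤ A) (U : Subgroup G) (hU : U.Normal) (hU1 : U ≠ ⊥) (hUH : U ≤ H)
    (hHZ : H ⊓ Subgroup.center G = ⊥) : A ⊓ H ≠ ⊥ := by
  intro hAH
  have hU_central : U ≤ Subgroup.center G :=
    Subgroup.le_center_of_commutator_inf_eq_bot <| eq_bot_iff.2 <| hAH ▸ inf_le_inf hGA hUH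
  exact hU1 <| eq_bot_iff.2 <| hHZ ▸ le_inf hUH hU_central

/-- Let `G` be a finite group, `A` a cyclic subgroup containing `G'`, and `H` a subgroup of `G`
containing a non-trivial normal subgroup of `G` with `H ∩ Z(G) = 1`. Then `A ∩ H ≠ 1`. -/
theorem stmt2 {G : Type*} [Group G] [Finite G] (A H : Subgroup G) (hA : IsCyclic A)
    (hGA : commutator G ≤ A) (U : Subgroup G) (hU : U.Normal) (hU1 : U ≠ ⊥) (hUH : U ≤ H)
    (hHZ : H ⊓ Subgroup.center G = ⊥) : A ⊓ H ≠ ⊥ :=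
  stmt2_general A H hGA U hU hU1 hUH hHZ
end

section
/- Let G be a finite group, A a cyclic subgroup containing G', and N an abelian subgroup of G. Then a subgroup K of N contains no non-trivial normal subgroup of G if and only if A ∩ K = 1 and Z(G) ∩ K = 1. -/
/-!
If `U ⊴ G` lies in `K`, then `⁅G, U⁆ ≤ G' ∩ U ≤ A ∩ K`, so `A ∩ K = 1` forces `U` to be central
and then `Z(G) ∩ K = 1` forces `U = 1`. Conversely `A ∩ K` and `Z(G) ∩ K` are themselves normal:
the first because `A ⊇ G'` is normal and conjugation acts on the cyclic group `A` as a power map,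
so every subgroup of `A` is normal in `G`.
-/

namespace Subgroup

variable {G : Type*} [Group G]

theorem normal_of_le_center {H : Subgroup G} (hH : H ≤ center G) : H.Normal where
  conj_mem h hh g := by
    rw [mem_center_iff.mp (hH hh) g, mul_inv_cancel_right]
    exact hh

theorem normal_of_le_of_isCyclic {A H : Subgroup G} [A.Normal] (hA : IsCyclic A) (hHA : H ≤ A) :
    H.Normal where
  conj_mem h hh g := by
    obtain ⟨m, hm⟩ := (MulAut.conjNormal (H := A) g).toMonoidHom.map_cyclic
    have hconj : g * h * g⁻¹ = h ^ m := congrArg Subtype.val (hm ⟨h, hHA hh⟩)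
    rw [hconj]
    exact H.zpow_mem hh m

theorem le_center_of_disjoint_commutator {U : Subgroup G} [U.Normal]
    (hU : Disjoint (_root_.commutator G) U) : U ≤ center G := by
  have hcomm : ⁅U, (⊤ : Subgroup G)⁆ = ⊥ :=
    le_bot_iff.mp (hU (commutator_mono le_top le_rfl) (commutator_le_left U ⊤))
  rw [← centralizer_univ, ← coe_top]
  exact commutator_eq_bot_iff_le_centralizer.mp hcomm

end Subgroup

theorem stmt3_general {G : Type*} [Group G] (A K : Subgroup G) (hA : IsCyclic A)
    (hGA : commutator G ≤ A) :
    (∀ U : Subgroup G, U.Normal → U ≤ K → U = ⊥) ↔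
      A ⊓ K = ⊥ ∧ Subgroup.center G ⊓ K = ⊥ := by
  have : A.Normal := Subgroup.Normal.of_commutator_le G hGA
  constructor
  · intro h
    exact ⟨h _ (Subgroup.normal_of_le_of_isCyclic hA inf_le_left) inf_le_right,
      h _ (Subgroup.normal_of_le_center inf_le_left) inf_le_right⟩
  · rintro ⟨hAK, hZK⟩ U hU hUK
    have hUA : Disjoint (commutator G) U :=
      disjoint_iff.mpr (eq_bot_mono (inf_le_inf hGA hUK) hAK)
    exact eq_bot_mono (le_inf (Subgroup.le_center_of_disjoint_commutator hUA) hUK) hZK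

/-- Let `G` be a finite group, `A` a cyclic subgroup containing `G'`, `N` an abelian subgroup
of `G` and `K ≤ N`. Then `K` contains no non-trivial normal subgroup of `G` if and only if
`A ∩ K = 1` and `Z(G) ∩ K = 1`. -/
theorem stmt3 {G : Type*} [Group G] [Finite G] (A N K : Subgroup G) (hA : IsCyclic A)
    (hGA : commutator G ≤ A) (hN : ∀ x ∈ N, ∀ y ∈ N, x * y = y * x) (hKN : K ≤ N) :
    (∀ U : Subgroup G, U.Normal → U ≤ K → U = ⊥) ↔
      A ⊓ K = ⊥ ∧ Subgroup.center G ⊓ K = ⊥ :=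
  stmt3_general A K hA hGA
end

section
/- Let G be a finite group with G' contained in a cyclic subgroup A, let C = C_G(A), and let x ∈ C with (x, c) ≠ 1 for some c ∈ C. Set N = ⟨(x, c)⟩. Then the conjugacy class of x in G satisfies N·x^G = x^G, i.e. for every n ∈ N and g ∈ G, n·x^g is conjugate to x in G. -/
/-!
Write `w = (x, c)`. Both `w` and `a = x⁻¹ x^g` are commutators, so they lie in `A` and commute with
`x` and `c`. Hence `x^g = x a` satisfies `x^g c = c w x^g`, and powering gives
`c^{-m} x^g c^m = w^m x^g`: left multiplication by `w^m` maps the conjugate `x^g` to another conjugate.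
-/

section

open scoped commutatorElement

variable {G : Type*} [Group G]

theorem inv_mul_inv_mul_mul_mem_commutator (a b : G) : a⁻¹ * b⁻¹ * a * b ∈ commutator G := by
  have h := Subgroup.commutator_mem_commutator (Subgroup.mem_top a⁻¹) (Subgroup.mem_top b⁻¹)
  rwa [commutatorElement_def, inv_inv, inv_inv] at h

theorem isConj_zpow_mul_of_semiconjBy {y c w : G} (h : SemiconjBy y c (c * w))
    (hcw : Commute c w) (m : ℤ) : IsConj y (w ^ m * y) := by
  refine isConj_iff.mpr ⟨c ^ (-m), ?_⟩
  have hm : y * c ^ m = c ^ m * w ^ m * y := by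
    rw [← hcw.mul_zpow]; exact h.zpow_right m
  rw [zpow_neg, inv_inv, mul_assoc, hm]
  group

theorem semiconjBy_mul_commutator {x c a : G} (hca : Commute c a)
    (hxw : Commute x (x⁻¹ * c⁻¹ * x * c)) :
    SemiconjBy (x * a) c (c * (x⁻¹ * c⁻¹ * x * c)) := by
  calc x * a * c = x * c * a := by rw [mul_assoc, ← hca.eq, mul_assoc]
    _ = c * (x⁻¹ * c⁻¹ * x * c) * x * a := by rw [mul_assoc c, ← hxw.eq]; group
    _ = c * (x⁻¹ * c⁻¹ * x * c) * (x * a) := by group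

end

theorem stmt5_general {G : Type*} [Group G] (A : Subgroup G)
    (hGA : commutator G ≤ A) (x c : G)
    (hx : x ∈ Subgroup.centralizer (A : Set G))
    (hc : c ∈ Subgroup.centralizer (A : Set G)) :
    ∀ n ∈ Subgroup.zpowers (x⁻¹ * c⁻¹ * x * c), ∀ g : G, IsConj x (n * (g⁻¹ * x * g)) := by
  rintro _ ⟨m, rfl⟩ g
  have hwA := hGA (inv_mul_inv_mul_mul_mem_commutator x c)
  have haA := hGA (inv_mul_inv_mul_mul_mem_commutator x g)
  have hxg : g⁻¹ * x * g = x * (x⁻¹ * g⁻¹ * x * g) := by group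
  have hconj : IsConj x (g⁻¹ * x * g) := isConj_iff.mpr ⟨g⁻¹, by group⟩
  refine hconj.trans ?_
  rw [hxg]
  exact isConj_zpow_mul_of_semiconjBy
    (semiconjBy_mul_commutator (hc _ haA).symm (hx _ hwA).symm) (hc _ hwA).symm m

/-- Let `G` be finite with `G'` contained in a cyclic subgroup `A`, `C = C_G(A)`, and
`x ∈ C` with `(x, c) ≠ 1` for some `c ∈ C`. With `N = ⟨(x, c)⟩` one has `N·x^G = x^G`:
for every `n ∈ N` and `g ∈ G`, `n·x^g` is conjugate to `x` in `G`. -/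
theorem stmt5 {G : Type*} [Group G] [Finite G] (A : Subgroup G) (hA : IsCyclic A)
    (hGA : commutator G ≤ A) (x c : G)
    (hx : x ∈ Subgroup.centralizer (A : Set G))
    (hc : c ∈ Subgroup.centralizer (A : Set G))
    (hxc : x⁻¹ * c⁻¹ * x * c ≠ 1) :
    ∀ n ∈ Subgroup.zpowers (x⁻¹ * c⁻¹ * x * c), ∀ g : G, IsConj x (n * (g⁻¹ * x * g)) :=
  stmt5_general A hGA x c hx hc
end

section
/- Let G be a finite group, N a normal subgroup, u ∈ RG, and x ∈ G such that N·x^G = x^G. Then ε_x^G(u) = ε_{xN}^{G/N}(ω_N(u)), where ω_N : RG → R(G/N) is induced by the quotient map. -/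
open scoped Classical

/-!
The hypothesis on `x` says that the conjugacy class of `x` is a union of cosets of `N`, so it is
the full preimage of the class of `xN` in `G ⧸ N`. Summing the coefficients of `u` over a full
preimage is the same as summing the coefficients of its image `ω_N(u)` over the set downstairs.
-/

theorem Finsupp.sum_ite_comp_eq_sum_ite_mapDomain {α β M : Type*} [Fintype α] [Fintype β]
    [AddCommMonoid M] (f : α → β) (v : α →₀ M) (p : β → Prop) [DecidablePred p] :
    (∑ a, if p (f a) then v a else 0) = ∑ b, if p b then v.mapDomain f b else 0 := by
  rw [← v.sum_fintype (fun a m => if p (f a) then m else 0) fun _ => ite_self 0,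
    ← (v.mapDomain f).sum_fintype (fun b m => if p b then m else 0) fun _ => ite_self 0]
  exact (Finsupp.sum_mapDomain_index (N := M) (h := fun b m => if p b then m else 0)
    (fun _ => ite_self 0) fun _ _ _ => ite_add_zero).symm

theorem QuotientGroup.isConj_mk_iff {G : Type*} [Group G] (N : Subgroup G) [N.Normal] {x : G}
    (hx : ∀ n ∈ N, ∀ y : G, IsConj x y → IsConj x (n * y)) (h : G) :
    IsConj (x : G ⧸ N) h ↔ IsConj x h := by
  refine ⟨fun hc => ?_, (QuotientGroup.mk' N).map_isConj⟩
  obtain ⟨c, hc⟩ := isConj_iff.mp hc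
  obtain ⟨c, rfl⟩ := QuotientGroup.mk_surjective c
  set y := c * x * c⁻¹
  have hyh : h * y⁻¹ ∈ N :=
    (Subgroup.Normal.mem_comm_iff inferInstance).mp (QuotientGroup.eq.mp hc)
  -- `h = (h * y⁻¹) * y` with `y` conjugate to `x`
  simpa using hx _ hyh y (isConj_iff.mpr ⟨c, rfl⟩)

/-- If `N ⊴ G`, `u ∈ RG` and `x ∈ G` with `N·x^G = x^G`, then
`ε_x^G(u) = ε_{xN}^{G/N}(ω_N(u))`. -/
theorem stmt8 {R : Type*} [CommRing R] {G : Type*} [Group G] [Fintype G]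
    (N : Subgroup G) [N.Normal] (u : MonoidAlgebra R G) (x : G)
    (hx : ∀ n ∈ N, ∀ y : G, IsConj x y → IsConj x (n * y)) :
    (∑ h : G, if IsConj x h then u.coeff h else 0)
      = ∑ q : G ⧸ N, if IsConj (QuotientGroup.mk x : G ⧸ N) q
          then (MonoidAlgebra.mapDomainRingHom R (QuotientGroup.mk' N) u).coeff q else 0 := by
  simp_rw [← QuotientGroup.isConj_mk_iff N hx]
  exact Finsupp.sum_ite_comp_eq_sum_ite_mapDomain _ u.coeff _
end

section
/- Let N = C × H be a finite abelian group with C cyclic, and let K ≤ N be a subgroup with N/K cyclic and K ∩ (C × 1) = 1. Then |K| = |N| / exp(N) = |H|, and the projection of N onto H restricts to an isomorphism from K onto H; in particular K = {f(h)·h : h ∈ H} for a unique homomorphism f : H → C. -/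
/-!
The projection `K → H` is injective because `K` meets `C × 1` trivially, so `|K| ≤ |H|`.
Conversely `N/K` is cyclic, so its order is its exponent, which divides `exp(N) = |C|`;
hence `|C| · |H| = |N| = [N : K] · |K| ≤ |C| · |K|`. Thus the projection is a bijection
`K ≃* H`, and composing its inverse with the projection to `C` gives the homomorphism whose
graph is `K`.
-/

namespace Subgroup

variable {G H : Type*} [Group G] [Group H]

theorem injective_snd_comp_subtype_of_inf_prod_eq_bot {K : Subgroup (G × H)}
    (hK : K ⊓ (⊤ : Subgroup G).prod ⊥ = ⊥) :
    Function.Injective ((MonoidHom.snd G H).comp K.subtype) := by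
  rw [injective_iff_map_eq_one]
  intro k hk
  have hk_mem : (k : G × H) ∈ K ⊓ (⊤ : Subgroup G).prod ⊥ :=
    ⟨k.2, mem_prod.2 ⟨trivial, hk⟩⟩
  rw [hK] at hk_mem
  exact Subtype.ext hk_mem

theorem card_le_card_of_index_le_card_fst [Finite G] (K : Subgroup (G × H))
    (hK : K.index ≤ Nat.card G) : Nat.card H ≤ Nat.card K := by
  have hcard : K.index * Nat.card K = Nat.card G * Nat.card H := by
    rw [index_mul_card, Nat.card_prod]
  exact Nat.le_of_mul_le_mul_left
    (hcard ▸ Nat.mul_le_mul_right _ hK) Nat.card_pos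

theorem existsUnique_fst_eq_of_bijective_snd {K : Subgroup (G × H)}
    (hK : Function.Bijective ((MonoidHom.snd G H).comp K.subtype)) :
    ∃! f : H →* G, ∀ x : G × H, x ∈ K ↔ x.1 = f x.2 := by
  set e : K ≃* H := MulEquiv.ofBijective _ hK
  set f := (MonoidHom.fst G H).comp (K.subtype.comp e.symm.toMonoidHom)
  have hf : ∀ x : G × H, x ∈ K ↔ x.1 = f x.2 := by
    intro x
    constructor
    · intro hx
      have : e.symm x.2 = ⟨x, hx⟩ := e.symm_apply_eq.2 rfl
      simp [f, this]
    · intro hx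
      have hsnd : ((e.symm x.2 : K) : G × H).2 = x.2 := e.apply_symm_apply x.2
      have : ((e.symm x.2 : K) : G × H) = x := Prod.ext hx.symm hsnd
      exact this ▸ (e.symm x.2).2
  exact ⟨f, hf, fun g hg => MonoidHom.ext fun h => (hf _).1 ((hg (g h, h)).2 rfl)⟩

end Subgroup

theorem IsCyclic.card_dvd_exponent_of_surjective {G Q F : Type*} [Monoid G] [Group Q]
    [IsCyclic Q] [FunLike F G Q] [MonoidHomClass F G Q] {f : F} (hf : Function.Surjective f) :
    Nat.card Q ∣ Monoid.exponent G :=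
  IsCyclic.exponent_eq_card (α := Q) ▸ MonoidHom.exponent_dvd hf

theorem stmt10_general {C H : Type*} [CommGroup C] [CommGroup H] [Finite C] [Finite H]
    (hCexp : Nat.card C = Monoid.exponent (C × H))
    (K : Subgroup (C × H)) (hq : IsCyclic ((C × H) ⧸ K))
    (hK : K ⊓ (Subgroup.prod ⊤ ⊥) = ⊥) :
    Nat.card K = Nat.card (C × H) / Monoid.exponent (C × H) ∧
    Nat.card K = Nat.card H ∧
    (∃ e : K ≃* H, ∀ k : K, e k = (k : C × H).2) ∧
    (∃! f : H →* C, ∀ x : C × H, x ∈ K ↔ x.1 = f x.2) := by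
  have hinj := Subgroup.injective_snd_comp_subtype_of_inf_prod_eq_bot hK
  have hindex : K.index ≤ Nat.card C :=
    Nat.le_of_dvd Nat.card_pos <| hCexp ▸
      IsCyclic.card_dvd_exponent_of_surjective (QuotientGroup.mk'_surjective K)
  have hKH : Nat.card K = Nat.card H :=
    le_antisymm (Nat.card_le_card_of_injective _ hinj)
      (K.card_le_card_of_index_le_card_fst hindex)
  have hbij := (Nat.bijective_iff_injective_and_card _).2 ⟨hinj, hKH⟩
  refine ⟨?_, hKH, ⟨MulEquiv.ofBijective _ hbij, fun _ => rfl⟩,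
    Subgroup.existsUnique_fst_eq_of_bijective_snd hbij⟩
  rw [← hCexp, Nat.card_prod, hKH, Nat.mul_div_cancel_left _ Nat.card_pos]

/-- Let `N = C × H` be a finite abelian group with `C` cyclic of order `exp(N)`, and let
`K ≤ N` with `N/K` cyclic and `K ∩ (C × 1) = 1`. Then `|K| = |N|/exp(N) = |H|`, the
projection onto `H` restricts to an isomorphism `K ≅ H`, and `K = {(f h, h) : h ∈ H}` for a
unique homomorphism `f : H → C`. -/
theorem stmt10 {C H : Type*} [CommGroup C] [CommGroup H] [Finite C] [Finite H]
    (hC : IsCyclic C) (hCexp : Nat.card C = Monoid.exponent (C × H))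
    (K : Subgroup (C × H)) (hq : IsCyclic ((C × H) ⧸ K))
    (hK : K ⊓ (Subgroup.prod ⊤ ⊥) = ⊥) :
    Nat.card K = Nat.card (C × H) / Monoid.exponent (C × H) ∧
    Nat.card K = Nat.card H ∧
    (∃ e : K ≃* H, ∀ k : K, e k = (k : C × H).2) ∧
    (∃! f : H →* C, ∀ x : C × H, x ∈ K ↔ x.1 = f x.2) :=
  stmt10_general hCexp K hq hK
end

section
/- Let G be a finite group, A a cyclic subgroup containing G', and N an abelian subgroup of G containing A. Let 𝕂 be the set of subgroups K of N such that N/K is cyclic and K contains no non-trivial normal subgroup of G. Then for every K ∈ 𝕂, one has |𝕂| ≤ |K| = |N| / exp(N). -/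
/-!
For `K ∈ 𝕂` the quotient `N/K` is cyclic, so its order `m` divides `exp N`; conversely
`N^m ≤ K` is normal in `G`, hence trivial, so `|N/K| = exp N` and `|K| = |N| / exp N`.

For the bound, let `B = A·Ω ≤ N`, where `Ω` is the kernel of `x ↦ x^s` for some `s` coprime to
`|A|` and divisible by every prime of `exp N` not dividing `|A|`. Subgroups of the cyclic normal
subgroup `A` are normal, and `Ω` is central because `[G, Ω] ≤ A` has exponent coprime to `|A|`;
hence every `K ∈ 𝕂` meets `B` trivially. So `B` embeds in the cyclic group `N/K`, and `|B|` has
the same prime factors as `exp N`. Every `K ∈ 𝕂` is the kernel of `φ(exp N)` characters of `N`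
faithful on `B`, and there are at most `φ(|B|) · |N/B| = φ(exp N) · |N| / exp N` such characters.
-/

open scoped IsMulCommutative

open Function Subgroup

theorem Nat.totient_mul_eq_of_primeFactors_eq {a b : ℕ} (h : a.primeFactors = b.primeFactors) :
    a.totient * b = b.totient * a := by
  have hP : 0 < ∏ p ∈ a.primeFactors, p :=
    Finset.prod_pos fun p hp => (Nat.prime_of_mem_primeFactors hp).pos
  refine Nat.eq_of_mul_eq_mul_right hP ?_
  calc a.totient * b * ∏ p ∈ a.primeFactors, p
      = a.totient * (∏ p ∈ a.primeFactors, p) * b := by ring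
    _ = a * (∏ p ∈ a.primeFactors, (p - 1)) * b := by rw [Nat.totient_mul_prod_primeFactors]
    _ = b.totient * (∏ p ∈ b.primeFactors, p) * a := by
      rw [h, Nat.totient_mul_prod_primeFactors]; ring
    _ = b.totient * a * ∏ p ∈ a.primeFactors, p := by rw [h]; ring

theorem Nat.totient_mul_div_eq_of_dvd {b e n : ℕ} (hbe : b ∣ e) (hen : e ∣ n) (he : e ≠ 0)
    (hprime : ∀ p, p.Prime → p ∣ e → p ∣ b) :
    b.totient * (n / b) = e.totient * (n / e) := by
  have hb : b ≠ 0 := by rintro rfl; exact he (Nat.eq_zero_of_zero_dvd hbe)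
  have hfac : b.primeFactors = e.primeFactors :=
    (Nat.primeFactors_mono hbe he).antisymm fun p hp =>
      Nat.mem_primeFactors.2 ⟨Nat.prime_of_mem_primeFactors hp,
        hprime p (Nat.prime_of_mem_primeFactors hp) (Nat.dvd_of_mem_primeFactors hp), hb⟩
  obtain ⟨j, rfl⟩ := hbe
  obtain ⟨k, rfl⟩ := hen
  have htot : (b * j).totient = b.totient * j := by
    have := Nat.totient_mul_eq_of_primeFactors_eq hfac
    refine Nat.eq_of_mul_eq_mul_right (Nat.pos_of_ne_zero hb) ?_
    rw [← this]; ring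
  rw [mul_assoc, Nat.mul_div_cancel_left _ (Nat.pos_of_ne_zero hb), ← mul_assoc b,
    Nat.mul_div_cancel_left _ (Nat.pos_of_ne_zero he), htot, mul_assoc]

theorem Nat.exists_coprime_forall_prime_dvd (n a : ℕ) (hn : n ≠ 0) :
    ∃ s, s.Coprime a ∧ ∀ p, p.Prime → p ∣ n → ¬ p ∣ a → p ∣ s := by
  classical
  refine ⟨∏ p ∈ n.primeFactors with ¬ p ∣ a, p, Nat.Coprime.prod_left fun p hp => ?_,
    fun p hp hpn hpa => Finset.dvd_prod_of_mem _ ?_⟩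
  · rw [Finset.mem_filter] at hp
    exact (Nat.Prime.coprime_iff_not_dvd (Nat.prime_of_mem_primeFactors hp.1)).2 hp.2
  · exact Finset.mem_filter.2 ⟨Nat.mem_primeFactors.2 ⟨hp, hpn, hn⟩, hpa⟩

theorem orderOf_monoidHom_eq_orderOf_apply {Q R : Type*} [Group Q] [CommGroup R] {g : Q}
    (hg : ∀ x, x ∈ zpowers g) (ψ : Q →* R) :
    orderOf ψ = orderOf (ψ g) := by
  refine orderOf_eq_orderOf_iff.2 fun n =>
    ⟨fun h => by rw [← MonoidHom.pow_apply, h, MonoidHom.one_apply], fun h => ?_⟩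
  ext x
  obtain ⟨k, rfl⟩ := mem_zpowers_iff.1 (hg x)
  rw [MonoidHom.pow_apply, map_zpow, ← zpow_natCast, ← zpow_mul, mul_comm, zpow_mul,
    zpow_natCast, h, one_zpow, MonoidHom.one_apply]

theorem injective_iff_orderOf_apply_eq {Q R : Type*} [Group Q] [CommGroup R] {g : Q}
    (hg : ∀ x, x ∈ zpowers g) (ψ : Q →* R) :
    Injective ψ ↔ orderOf (ψ g) = orderOf g := by
  refine ⟨fun h => orderOf_injective ψ h g,
    fun h => (injective_iff_map_eq_one ψ).2 fun x hx => ?_⟩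
  obtain ⟨k, rfl⟩ := mem_zpowers_iff.1 (hg x)
  rw [map_zpow, ← orderOf_dvd_iff_zpow_eq_one, h] at hx
  exact orderOf_dvd_iff_zpow_eq_one.1 hx

theorem IsCyclic.card_injective_monoidHom {Q : Type*} [CommGroup Q] [Finite Q] [IsCyclic Q]
    (R : Type*) [CommMonoid R] [HasEnoughRootsOfUnity R (Nat.card Q)] :
    Nat.card {ψ : Q →* Rˣ // Injective ψ} = (Nat.card Q).totient := by
  classical
  obtain ⟨e⟩ := IsCyclic.monoidHom_equiv_self Q R
  obtain ⟨g, hg⟩ := IsCyclic.exists_generator (α := Q)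
  have hinj : {ψ : Q →* Rˣ // Injective ψ} ≃ {x : Q // orderOf x = Nat.card Q} :=
    e.toEquiv.subtypeEquiv fun ψ => by
      rw [MulEquiv.toEquiv_eq_coe, MulEquiv.coe_toEquiv, e.orderOf_eq,
        orderOf_monoidHom_eq_orderOf_apply hg, injective_iff_orderOf_apply_eq hg,
        orderOf_eq_card_of_forall_mem_zpowers hg]
  cases nonempty_fintype Q
  rw [Nat.card_congr hinj, Nat.card_eq_fintype_card, Fintype.card_subtype,
    IsCyclic.card_orderOf_eq_totient (Nat.card_eq_fintype_card (α := Q) ▸ dvd_rfl)]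

theorem MonoidHom.card_preimage_le_mul_card_ker {X Y : Type*} [Group X] [Group Y] [Finite X]
    [Finite Y] (f : X →* Y) (S : Set Y) :
    Nat.card (f ⁻¹' S) ≤ Nat.card S * Nat.card f.ker := by
  set σ := surjInv f.rangeRestrict_surjective
  have hσ (x : X) : f (σ (f.rangeRestrict x)) = f x :=
    congrArg Subtype.val (surjInv_eq f.rangeRestrict_surjective _)
  refine (Nat.card_le_card_of_injective
    (fun x : f ⁻¹' S => ((⟨f x, x.2⟩ : S), (⟨(σ (f.rangeRestrict x))⁻¹ * x, by
      rw [mem_ker, map_mul, map_inv, hσ, inv_mul_cancel]⟩ : f.ker))) ?_).trans_eq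
    (Nat.card_prod _ _)
  intro x₁ x₂ h
  simp only [Prod.mk.injEq, Subtype.mk.injEq] at h
  have hr : f.rangeRestrict x₁ = f.rangeRestrict x₂ := Subtype.ext h.1
  rw [hr] at h
  exact Subtype.ext (mul_left_cancel h.2)

theorem QuotientGroup.injective_mk'_comp_subtype {M : Type*} [Group M] {K B : Subgroup M}
    [K.Normal] (h : K ⊓ B = ⊥) : Injective ((QuotientGroup.mk' K).comp B.subtype) := by
  refine (injective_iff_map_eq_one _).2 fun y hy => Subtype.ext ?_
  have hyK : (y : M) ∈ K := (QuotientGroup.eq_one_iff _).1 hy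
  simpa [h] using (mem_inf.2 ⟨hyK, y.2⟩ : (y : M) ∈ K ⊓ B)

section Counting

variable {M : Type*} [CommGroup M] [Finite M]

theorem card_mul_totient_le_card_preimage_injective (B : Subgroup M) (S : Set (Subgroup M))
    (hcyc : ∀ K ∈ S, IsCyclic (M ⧸ K)) (hcard : ∀ K ∈ S, Nat.card (M ⧸ K) = Monoid.exponent M)
    (hdisj : ∀ K ∈ S, K ⊓ B = ⊥) :
    Nat.card S * (Monoid.exponent M).totient ≤
      Nat.card (MonoidHom.domRestrictHom B ℂˣ ⁻¹' {μ | Injective μ}) := by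
  have : Fintype S := Fintype.ofFinite S
  have hfib (K : S) :
      Nat.card {ψ : M ⧸ K.1 →* ℂˣ // Injective ψ} = (Monoid.exponent M).totient := by
    have := hcyc K K.2
    rw [← hcard K K.2]
    exact IsCyclic.card_injective_monoidHom ℂ
  calc Nat.card S * (Monoid.exponent M).totient
      = Nat.card (Σ K : S, {ψ : M ⧸ K.1 →* ℂˣ // Injective ψ}) := by
        simp [Nat.card_sigma, hfib]
    _ ≤ _ := Nat.card_le_card_of_injective
      (fun x => ⟨x.2.1.comp (QuotientGroup.mk' x.1.1), x.2.2.comp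
        (QuotientGroup.injective_mk'_comp_subtype (hdisj x.1 x.1.2))⟩) ?_
  rintro ⟨⟨K₁, hK₁⟩, ψ₁, hψ₁⟩ ⟨⟨K₂, hK₂⟩, ψ₂, hψ₂⟩ h
  have h : ψ₁.comp (QuotientGroup.mk' K₁) = ψ₂.comp (QuotientGroup.mk' K₂) :=
    congrArg Subtype.val h
  obtain rfl : K₁ = K₂ := by
    simpa only [MonoidHom.ker_comp_of_injective _ _ hψ₁, MonoidHom.ker_comp_of_injective _ _ hψ₂,
      QuotientGroup.ker_mk'] using congrArg MonoidHom.ker h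
  obtain rfl := QuotientGroup.monoidHom_ext K₁ h
  rfl

theorem card_le_card_div_exponent_of_inf_eq_bot (B : Subgroup M) [IsCyclic B]
    (hB : ∀ p, p.Prime → p ∣ Monoid.exponent M → p ∣ Nat.card B) (S : Set (Subgroup M))
    (hcyc : ∀ K ∈ S, IsCyclic (M ⧸ K)) (hcard : ∀ K ∈ S, Nat.card (M ⧸ K) = Monoid.exponent M)
    (hdisj : ∀ K ∈ S, K ⊓ B = ⊥) :
    Nat.card S ≤ Nat.card M / Monoid.exponent M := by
  set e := Monoid.exponent M
  have he : e ≠ 0 := Monoid.exponent_ne_zero_of_finite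
  have hupper : Nat.card (MonoidHom.domRestrictHom B ℂˣ ⁻¹' {μ | Injective μ}) ≤
      (Nat.card B).totient * (Nat.card M / Nat.card B) := by
    refine (MonoidHom.card_preimage_le_mul_card_ker _ _).trans_eq ?_
    rw [CommGroup.card_domRestrictHom_ker, ← IsCyclic.card_injective_monoidHom ℂ,
      B.card_eq_card_quotient_mul_card_subgroup, Nat.mul_div_cancel _ Nat.card_pos]
    rfl
  have hBe : Nat.card B ∣ e :=
    IsCyclic.exponent_eq_card (α := B) ▸ Monoid.exponent_submonoid_dvd B.toSubmonoid
  have htot := Nat.totient_mul_div_eq_of_dvd hBe Group.exponent_dvd_nat_card he hB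
  refine Nat.le_of_mul_le_mul_right ?_ (Nat.totient_pos.2 (Nat.pos_of_ne_zero he))
  calc Nat.card S * e.totient
      ≤ _ := card_mul_totient_le_card_preimage_injective B S hcyc hcard hdisj
    _ ≤ _ := hupper
    _ = Nat.card M / e * e.totient := by rw [htot, mul_comm]

theorem dvd_card_sup_ker_powMonoidHom (A : Subgroup M) {s : ℕ}
    (hs : ∀ p, p.Prime → p ∣ Monoid.exponent M → ¬ p ∣ Nat.card A → p ∣ s) {p : ℕ}
    (hp : p.Prime) (hpe : p ∣ Monoid.exponent M) :
    p ∣ Nat.card ↥(A ⊔ (powMonoidHom s : M →* M).ker) := by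
  by_cases hpA : p ∣ Nat.card A
  · exact hpA.trans (card_dvd_of_le le_sup_left)
  have : Fact p.Prime := ⟨hp⟩
  obtain ⟨x, hx⟩ := exists_prime_orderOf_dvd_card' p (hpe.trans Group.exponent_dvd_nat_card)
  have hxs : x ^ s = 1 := orderOf_dvd_iff_pow_eq_one.1 (hx ▸ hs p hp hpe hpA)
  exact hx ▸ orderOf_dvd_natCard _ (mem_sup_right hxs)

end Counting

namespace Subgroup

variable {G : Type*} [Group G]

def IsCoreFree (K : Subgroup G) : Prop :=
  ∀ U : Subgroup G, U.Normal → U ≤ K → U = ⊥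

theorem IsCoreFree.eq_one_of_forall_conj_mem {K : Subgroup G} (hK : K.IsCoreFree) {x : G}
    (hx : ∀ g : G, g * x * g⁻¹ ∈ K) : x = 1 := by
  have hx' : x ∈ K.normalCore := hx
  rwa [hK _ K.normalCore_normal K.normalCore_le, mem_bot] at hx'

theorem IsCoreFree.inf_eq_bot_of_isCyclic {K A : Subgroup G} (hK : K.IsCoreFree) [A.Normal]
    [IsCyclic A] : K ⊓ A = ⊥ := by
  refine eq_bot_iff.2 fun x hx => mem_bot.2 (hK.eq_one_of_forall_conj_mem fun g => ?_)
  obtain ⟨m, hm⟩ := (MulAut.conjNormal (H := A) g).toMonoidHom.map_cyclic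
  have hconj : g * x * g⁻¹ = x ^ m := by
    simpa using congrArg Subtype.val (hm ⟨x, hx.2⟩)
  exact hconj ▸ K.zpow_mem hx.1 m

theorem conj_eq_self_of_pow_eq_one {A N : Subgroup G} (hGA : _root_.commutator G ≤ A) [N.Normal]
    [IsMulCommutative N] {s : ℕ} (hs : s.Coprime (Nat.card A)) {x : G} (hxN : x ∈ N)
    (hx : x ^ s = 1) (g : G) : g * x * g⁻¹ = x := by
  have hconjN : g * x * g⁻¹ ∈ N := ‹N.Normal›.conj_mem x hxN g
  have hcomm : Commute (g * x * g⁻¹) x⁻¹ :=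
    congrArg Subtype.val (mul_comm (⟨_, hconjN⟩ : N) ⟨_, N.inv_mem hxN⟩)
  have hcA : g * x * g⁻¹ * x⁻¹ ∈ A := hGA (by
    rw [← commutatorElement_def, _root_.commutator_def]
    exact commutator_mem_commutator (mem_top g) (mem_top x))
  have hcs : (g * x * g⁻¹ * x⁻¹) ^ s = 1 := by
    rw [hcomm.mul_pow, conj_pow, inv_pow, hx]; group
  have hcard : (g * x * g⁻¹ * x⁻¹) ^ Nat.card A = 1 :=
    congrArg Subtype.val (pow_card_eq_one' (G := A) (x := ⟨_, hcA⟩))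
  have hc := pow_gcd_eq_one.2 ⟨hcs, hcard⟩
  rwa [hs.gcd_eq_one, pow_one, mul_inv_eq_one] at hc

theorem IsCoreFree.subgroupOf_inf_sup_ker_eq_bot {K A N : Subgroup G} (hK : K.IsCoreFree)
    (hGA : _root_.commutator G ≤ A) [A.Normal] [IsCyclic A] [N.Normal] [IsMulCommutative N]
    {s : ℕ} (hs : s.Coprime (Nat.card A)) :
    K.subgroupOf N ⊓ (A.subgroupOf N ⊔ (powMonoidHom s : N →* N).ker) = ⊥ := by
  refine eq_bot_iff.2 fun y ⟨hyK, hyB⟩ => ?_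
  obtain ⟨u, huA, z, hz, rfl⟩ := mem_sup.1 hyB
  have hz : z ^ s = 1 := hz
  have hyK : (u : G) * z ∈ K := hyK
  have hus : (u : G) ^ s = 1 := by
    have hmem : (u : G) ^ s ∈ K ⊓ A := by
      refine ⟨?_, A.pow_mem huA s⟩
      have := K.pow_mem hyK s
      rwa [← coe_mul, ← coe_pow, mul_pow, hz, mul_one] at this
    rwa [hK.inf_eq_bot_of_isCyclic, mem_bot] at hmem
  have hu : u = 1 := by
    have hcard : (u : G) ^ Nat.card A = 1 :=
      congrArg Subtype.val (pow_card_eq_one' (G := A) (x := ⟨_, huA⟩))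
    have := pow_gcd_eq_one.2 ⟨hus, hcard⟩
    rw [hs.gcd_eq_one, pow_one] at this
    exact Subtype.ext this
  subst hu
  rw [OneMemClass.coe_one, one_mul] at hyK
  rw [one_mul]
  refine mem_bot.2 (Subtype.ext (hK.eq_one_of_forall_conj_mem fun g => ?_))
  rwa [conj_eq_self_of_pow_eq_one hGA hs z.2 (congrArg Subtype.val hz) g]

theorem IsCoreFree.card_quotient_subgroupOf_eq_exponent {K N : Subgroup G} (hK : K.IsCoreFree)
    [N.Normal] [(K.subgroupOf N).Normal] [IsCyclic (N ⧸ K.subgroupOf N)] :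
    Nat.card (N ⧸ K.subgroupOf N) = Monoid.exponent N := by
  refine Nat.dvd_antisymm ?_ (Monoid.exponent_dvd_of_forall_pow_eq_one fun x =>
    Subtype.ext (hK.eq_one_of_forall_conj_mem fun g => ?_))
  · rw [← IsCyclic.exponent_eq_card]
    exact MonoidHom.exponent_dvd (QuotientGroup.mk'_surjective _)
  · have hpow (y : N) : ((y ^ Nat.card (N ⧸ K.subgroupOf N) : N) : G) ∈ K := by
      rw [← mem_subgroupOf, ← QuotientGroup.eq_one_iff, QuotientGroup.mk_pow]
      exact pow_card_eq_one'
    simpa [conj_pow] using hpow ⟨g * x * g⁻¹, ‹N.Normal›.conj_mem x x.2 g⟩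

theorem IsCoreFree.card_eq_card_div_exponent {K N : Subgroup G} (hK : K.IsCoreFree) (hKN : K ≤ N)
    [Finite N] [N.Normal] [(K.subgroupOf N).Normal] [IsCyclic (N ⧸ K.subgroupOf N)] :
    Nat.card K = Nat.card N / Monoid.exponent N := by
  rw [(K.subgroupOf N).card_eq_card_quotient_mul_card_subgroup,
    hK.card_quotient_subgroupOf_eq_exponent, Nat.mul_div_cancel_left _ (Nat.pos_of_ne_zero
      Monoid.exponent_ne_zero_of_finite)]
  exact Nat.card_congr (subgroupOfEquivOfLe hKN).toEquiv.symm

theorem card_image_subgroupOf {N : Subgroup G} {S : Set (Subgroup G)} (hS : ∀ K ∈ S, K ≤ N) :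
    Nat.card ((·.subgroupOf N) '' S) = Nat.card S :=
  Nat.card_image_of_injOn fun K hK L hL h => by
    rwa [subgroupOf_inj, inf_eq_left.2 (hS K hK), inf_eq_left.2 (hS L hL)] at h

end Subgroup

/-- Let `G` be finite, `A` a cyclic subgroup containing `G'`, `N` an abelian subgroup
containing `A`, and `𝕂` the set of subgroups `K` of `N` with `N/K` cyclic containing no
non-trivial normal subgroup of `G`. Then for every `K ∈ 𝕂` one has
`|𝕂| ≤ |K| = |N|/exp(N)`. -/
theorem stmt11 {G : Type*} [Group G] [Finite G] (A N : Subgroup G) (hA : IsCyclic A)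
    (hGA : commutator G ≤ A) (hAN : A ≤ N) [IsMulCommutative N]
    (𝕂 : Set (Subgroup G))
    (h𝕂 : 𝕂 = {K | K ≤ N ∧ IsCyclic (↥N ⧸ K.subgroupOf N) ∧
      ∀ U : Subgroup G, U.Normal → U ≤ K → U = ⊥})
    (K : Subgroup G) (hK : K ∈ 𝕂) :
    Nat.card 𝕂 ≤ Nat.card K ∧ Nat.card K = Nat.card N / Monoid.exponent N := by
  have mem (L : Subgroup G) (hL : L ∈ 𝕂) :
      L ≤ N ∧ IsCyclic (↥N ⧸ L.subgroupOf N) ∧ L.IsCoreFree := by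
    rw [h𝕂] at hL; exact hL
  have : N.Normal := .of_commutator_le G (hGA.trans hAN)
  have : A.Normal := .of_commutator_le G hGA
  obtain ⟨hKN, hKcyc, hKcore⟩ := mem K hK
  have hcardK : Nat.card K = Nat.card N / Monoid.exponent N :=
    hKcore.card_eq_card_div_exponent hKN
  refine ⟨?_, hcardK⟩
  obtain ⟨s, hs, hsp⟩ := Nat.exists_coprime_forall_prime_dvd (Monoid.exponent N) (Nat.card A)
    Monoid.exponent_ne_zero_of_finite
  set B : Subgroup N := A.subgroupOf N ⊔ (powMonoidHom s).ker
  have hdisj (L : Subgroup G) (hL : L ∈ 𝕂) : L.subgroupOf N ⊓ B = ⊥ :=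
    (mem L hL).2.2.subgroupOf_inf_sup_ker_eq_bot hGA hs
  have : IsCyclic B :=
    isCyclic_of_injective _ (QuotientGroup.injective_mk'_comp_subtype (hdisj K hK))
  have hcardA : Nat.card (A.subgroupOf N) = Nat.card A :=
    Nat.card_congr (subgroupOfEquivOfLe hAN).toEquiv
  rw [hcardK, ← card_image_subgroupOf fun L hL => (mem L hL).1]
  refine card_le_card_div_exponent_of_inf_eq_bot B
    (fun p hp => dvd_card_sup_ker_powMonoidHom _ (hcardA ▸ hsp) hp) _ ?_ ?_ ?_ <;>
    rintro _ ⟨L, hL, rfl⟩ <;> have := (mem L hL).2.1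
  · exact this
  · exact (mem L hL).2.2.card_quotient_subgroupOf_eq_exponent
  · exact hdisj L hL
end

section
/- Let P be a finite abelian p-group, A a cyclic subgroup of P, and H a subgroup of P maximal among subgroups satisfying H ∩ A = 1. Then P/H is cyclic. -/
/-!
The image `B` of `A` in `P ⧸ H` is essential: a nontrivial subgroup of `P ⧸ H` meeting `B`
trivially would pull back to a subgroup strictly above `H` meeting `A` trivially. An essential
subgroup contains every element of prime order, so all solutions of `g ^ p = 1` in `P ⧸ H` lie in
the cyclic group `B`, and there are at most `p` of them. In a finite abelian `p`-group this bound
propagates to at most `p ^ k` solutions of `g ^ p ^ k = 1`, since the fibres of the `p`-th power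
map are cosets of the `p`-torsion; that is the counting criterion for cyclicity.
-/

open Finset

section PTorsionCount

variable {G : Type*} [CommGroup G] [Fintype G] [DecidableEq G]

theorem card_pow_mul_eq_one_le (m n : ℕ) :
    #{g : G | g ^ (m * n) = 1} ≤ #{g : G | g ^ n = 1} * #{g : G | g ^ m = 1} := by
  refine card_le_mul_card_image_of_maps_to (f := (· ^ n)) (fun g hg ↦ ?_) _ fun b _ ↦ ?_
  · simp only [mem_filter_univ] at hg ⊢
    rwa [← pow_mul, mul_comm]
  rcases ({g : G | g ^ (m * n) = 1 ∧ g ^ n = b} : Finset G).eq_empty_or_nonempty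
    with h | ⟨g₀, hg₀⟩
  · simp [filter_filter, h]
  -- translating by `g₀⁻¹` maps the fibre over `b` injectively into the `n`-torsion
  refine card_le_card_of_injOn (· * g₀⁻¹) (fun g hg ↦ ?_) fun _ _ _ _ ↦ mul_right_cancel
  simp only [coe_filter, mem_filter, mem_univ, true_and, Set.mem_ofPred_eq] at hg hg₀ ⊢
  rw [mul_pow, inv_pow, hg.2, hg₀.2, mul_inv_cancel]

theorem card_pow_prime_pow_eq_one_le {p : ℕ} (h : #{g : G | g ^ p = 1} ≤ p) (k : ℕ) :
    #{g : G | g ^ p ^ k = 1} ≤ p ^ k := by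
  induction k with
  | zero => simp [filter_eq']
  | succ k ih =>
    calc #{g : G | g ^ p ^ (k + 1) = 1}
        ≤ #{g : G | g ^ p = 1} * #{g : G | g ^ p ^ k = 1} := by
          rw [pow_succ]; exact card_pow_mul_eq_one_le _ _
      _ ≤ p * p ^ k := Nat.mul_le_mul h ih
      _ = p ^ (k + 1) := (pow_succ' p k).symm

theorem IsPGroup.isCyclic_of_card_pow_prime_eq_one_le {p : ℕ} (hp : p.Prime) (hG : IsPGroup p G)
    (h : #{g : G | g ^ p = 1} ≤ p) : IsCyclic G := by
  have := Fact.mk hp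
  obtain ⟨e, he⟩ := IsPGroup.iff_card.mp hG
  refine isCyclic_of_card_pow_eq_one_le fun n hn ↦ ?_
  obtain ⟨k, -, hk⟩ := (Nat.dvd_prime_pow hp).mp (Nat.gcd_dvd_right n (p ^ e))
  calc #{g : G | g ^ n = 1}
      ≤ #{g : G | g ^ n.gcd (p ^ e) = 1} := by
        refine card_le_card (monotone_filter_right _ fun g _ hg ↦ ?_)
        exact pow_gcd_eq_one.mpr ⟨hg, he ▸ pow_card_eq_one'⟩
    _ ≤ n.gcd (p ^ e) := hk ▸ card_pow_prime_pow_eq_one_le h k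
    _ ≤ n := Nat.gcd_le_left _ hn

end PTorsionCount

namespace Subgroup

variable {G : Type*} [Group G]

def IsEssential (B : Subgroup G) : Prop :=
  ∀ K : Subgroup G, K ≠ ⊥ → K ⊓ B ≠ ⊥

theorem IsEssential.mem_of_pow_prime_eq_one {p : ℕ} (hp : p.Prime) {B : Subgroup G}
    (hB : B.IsEssential) {g : G} (hg : g ^ p = 1) : g ∈ B := by
  have := Fact.mk hp
  rcases eq_or_ne g 1 with rfl | hg1
  · exact B.one_mem
  obtain ⟨⟨b, hbg, hbB⟩, hb1⟩ := ne_bot_iff_exists_ne_one.mp (hB _ (zpowers_ne_bot.mpr hg1))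
  have hb1 : b ≠ 1 := by rintro rfl; exact hb1 rfl
  have hgp : orderOf g = p := orderOf_eq_prime hg hg1
  have hbp : orderOf b = p :=
    orderOf_eq_prime (orderOf_dvd_iff_pow_eq_one.mp (hgp ▸ orderOf_dvd_of_mem_zpowers hbg)) hb1
  have hcard : Nat.card (zpowers g) = p := by rw [Nat.card_zpowers, hgp]
  have := Nat.finite_of_card_ne_zero (hcard ▸ hp.ne_zero)
  have hzpowers : zpowers b = zpowers g :=
    eq_of_le_of_card_ge (zpowers_le.mpr hbg) (by rw [hcard, Nat.card_zpowers, hbp])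
  exact zpowers_le.mp (hzpowers ▸ zpowers_le.mpr hbB)

theorem isEssential_map_mk' {A H : Subgroup G} [H.Normal]
    (hHA : H ⊓ A = ⊥) (hmax : ∀ H' : Subgroup G, H < H' → H' ⊓ A ≠ ⊥) :
    (A.map (QuotientGroup.mk' H)).IsEssential := by
  intro K hK hKA
  have hlt := (comap_lt_comap_of_surjective (QuotientGroup.mk'_surjective H)).mpr
    (bot_lt_iff_ne_bot.mpr hK)
  rw [MonoidHom.comap_bot, QuotientGroup.ker_mk'] at hlt
  refine hmax _ hlt (eq_bot_iff.mpr ?_)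
  have hmap : (K.comap (QuotientGroup.mk' H) ⊓ A).map (QuotientGroup.mk' H) = ⊥ :=
    eq_bot_iff.mpr <| hKA ▸ (map_inf_le _ _ _).trans (inf_le_inf_right _ (map_comap_le _ _))
  rw [map_eq_bot_iff, QuotientGroup.ker_mk'] at hmap
  exact hHA ▸ le_inf hmap inf_le_right

end Subgroup

/-- Let `P` be a finite abelian `p`-group, `A` a cyclic subgroup, and `H` maximal among
subgroups with `H ∩ A = 1`. Then `P/H` is cyclic. -/
theorem stmt12 {p : ℕ} (hp : p.Prime) {P : Type*} [CommGroup P] [Finite P]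
    (hP : IsPGroup p P) (A H : Subgroup P) (hA : IsCyclic A)
    (hHA : H ⊓ A = ⊥) (hmax : ∀ H' : Subgroup P, H < H' → H' ⊓ A ≠ ⊥) :
    IsCyclic (P ⧸ H) := by
  classical
  have := Fintype.ofFinite (P ⧸ H)
  set B := A.map (QuotientGroup.mk' H)
  have : IsCyclic B := isCyclic_of_surjective _ ((QuotientGroup.mk' H).subgroupMap_surjective A)
  have hBess : B.IsEssential := Subgroup.isEssential_map_mk' hHA hmax
  refine (hP.to_quotient H).isCyclic_of_card_pow_prime_eq_one_le hp ?_
  calc #{g : P ⧸ H | g ^ p = 1}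
      ≤ #{b : B | b ^ p = 1} := card_le_card_of_surjOn Subtype.val fun g hg ↦ by
        simp only [coe_filter, mem_univ, true_and, Set.mem_ofPred_eq] at hg
        exact ⟨⟨g, hBess.mem_of_pow_prime_eq_one hp hg⟩,
          by simpa [← Subgroup.coe_pow] using hg, rfl⟩
    _ ≤ p := IsCyclic.card_pow_eq_one_le hp.pos
end

section
/- Let G be a finite group with G' contained in a cyclic normal subgroup A, let x ∈ G be such that (x, g) ∈ A for all g ∈ G and x commutes with every element of A, and let f be a positive integer. Then [C_G(x^f) : C_G(x)] ≤ f. -/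
/-!
Sending `g ∈ C_G(x^f)` to `x⁻¹ (g x g⁻¹) = (x, g⁻¹) ∈ A` identifies the left cosets of
`C_G(x)` in `C_G(x^f)` with distinct elements of `A`. Since such an element commutes with `x`,
its `f`-th power is `x^{-f} g x^f g⁻¹ = 1`, and a cyclic group has at most `f` elements of
order dividing `f`.
-/

open Subgroup

theorem IsCyclic.natCard_pow_eq_one_le {α : Type*} [Group α] [Finite α] [IsCyclic α] {n : ℕ}
    (hn : 0 < n) : Nat.card {a : α // a ^ n = 1} ≤ n := by
  classical
  have : Fintype α := Fintype.ofFinite α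
  rw [Nat.card_eq_fintype_card, Fintype.card_subtype]
  exact IsCyclic.card_pow_eq_one_le hn

namespace Subgroup

variable {G : Type*} [Group G]

theorem relIndex_le_natCard_of_eq_iff_inv_mul_mem {H K : Subgroup G} {α : Type*} [Finite α]
    (φ : K → α) (hφ : ∀ a b : K, φ a = φ b ↔ (a : G)⁻¹ * b ∈ H) :
    H.relIndex K ≤ Nat.card α := by
  let ψ : K ⧸ H.subgroupOf K → α :=
    Quotient.lift φ fun a b hab =>
      (hφ a b).2 (mem_subgroupOf.mp (QuotientGroup.leftRel_apply.mp hab))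
  refine Nat.card_le_card_of_injective ψ ?_
  rintro ⟨a⟩ ⟨b⟩ hab
  exact Quotient.sound (QuotientGroup.leftRel_apply.mpr (mem_subgroupOf.mpr ((hφ a b).1 hab)))

theorem conj_eq_conj_iff_inv_mul_mem_centralizer {x g h : G} :
    g * x * g⁻¹ = h * x * h⁻¹ ↔ g⁻¹ * h ∈ centralizer {x} := by
  rw [mem_centralizer_singleton_iff, ← mul_right_inj g⁻¹, ← mul_left_inj h, eq_comm]
  simp only [mul_assoc, inv_mul_cancel_left, inv_mul_cancel, mul_one]

end Subgroup

theorem inv_mul_conj_pow_eq_one {G : Type*} [Group G] {x g : G} {n : ℕ}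
    (hx : Commute x (g * x * g⁻¹)) (hg : g ∈ centralizer {x ^ n}) :
    (x⁻¹ * (g * x * g⁻¹)) ^ n = 1 := by
  rw [hx.inv_left.mul_pow, conj_pow, mem_centralizer_singleton_iff.mp hg, inv_pow,
    mul_inv_cancel_right, inv_mul_cancel]

theorem stmt14_general {G : Type*} [Group G] [Finite G] (A : Subgroup G)
    (hA : IsCyclic A) (x : G)
    (hxA : ∀ g : G, x⁻¹ * g⁻¹ * x * g ∈ A) (hxC : ∀ a ∈ A, x * a = a * x)
    (f : ℕ) (hf : 0 < f) :
    (Subgroup.centralizer {x}).relIndex (Subgroup.centralizer {x ^ f}) ≤ f := by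
  have hmem (g : G) : x⁻¹ * (g * x * g⁻¹) ∈ A := by simpa [mul_assoc] using hxA g⁻¹
  have hcomm (g : G) : Commute x (g * x * g⁻¹) := by
    simpa using (Commute.refl x).mul_right (hxC _ (hmem g))
  let φ : centralizer {x ^ f} → {a : A // a ^ f = 1} := fun g =>
    ⟨⟨x⁻¹ * (g * x * g⁻¹), hmem g⟩,
      Subtype.ext (inv_mul_conj_pow_eq_one (hcomm g) g.2)⟩
  refine (relIndex_le_natCard_of_eq_iff_inv_mul_mem φ fun a b => ?_).trans
    (IsCyclic.natCard_pow_eq_one_le hf)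
  simp only [φ, Subtype.ext_iff, mul_right_inj]
  exact conj_eq_conj_iff_inv_mul_mem_centralizer

/-- Let `G` be finite with `G'` contained in a cyclic normal subgroup `A`, let `x ∈ G`
centralize `A` with all commutators `(x, g) ∈ A`, and let `f ≥ 1`. Then
`[C_G(x^f) : C_G(x)] ≤ f`. -/
theorem stmt14 {G : Type*} [Group G] [Finite G] (A : Subgroup G) [A.Normal]
    (hA : IsCyclic A) (hGA : commutator G ≤ A) (x : G)
    (hxA : ∀ g : G, x⁻¹ * g⁻¹ * x * g ∈ A) (hxC : ∀ a ∈ A, x * a = a * x)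
    (f : ℕ) (hf : 0 < f) :
    (Subgroup.centralizer {x}).relIndex (Subgroup.centralizer {x ^ f}) ≤ f :=
  stmt14_general A hA x hxA hxC f hf
end

section
/- Let G be a finite group, N an abelian normal subgroup of G, ψ a linear character of N (a homomorphism N → ℂ*), and ψ^G the induced character of G. Then for every element u = Σ_g u_g·g of the complex group algebra ℂG: ψ^G(u) = Σ_{n ∈ N} ψ(n)·[C_G(n) : N]·ε_n(u), where ε_n(u) = Σ_{h ∈ n^G} u_h is the partial augmentation and ψ^G is extended linearly to ℂG. -/
open scoped Classical

/-!
Write `ψ°` for `ψ` extended by zero to `G`. Substituting `g = y z y⁻¹` in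
`ψ^G(u) = |N|⁻¹ Σ_g u_g Σ_y ψ°(y⁻¹ g y)` gives `|N|⁻¹ Σ_z ψ°(z) Σ_y u(y z y⁻¹)`, and by
orbit–stabilizer for conjugation every conjugate of `z` occurs `|C_G(z)|` times in the inner sum,
which is therefore `|C_G(z)| ε_z(u)`. Only `z = n ∈ N` contribute, and since `N` is abelian,
`N ≤ C_G(n)`, so `|C_G(n)| / |N| = [C_G(n) : N]`.
-/

open Finset MulAction

theorem Fintype.sum_dite_eq_sum_subtype {α M : Type*} [Fintype α] [AddCommMonoid M]
    (p : α → Prop) [DecidablePred p] (f : {x // p x} → M) :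
    ∑ x : α, (if h : p x then f ⟨x, h⟩ else 0) = ∑ x : {x // p x}, f x := by
  rw [← Fintype.sum_subtype_add_sum_subtype p,
    Fintype.sum_eq_zero _ fun x : {x // ¬p x} => dif_neg x.2, add_zero]
  exact Fintype.sum_congr _ _ fun x => dif_pos x.2

theorem MulAction.card_filter_smul_eq {G X : Type*} [Group G] [MulAction G X] [Fintype G]
    {a b : X} {g₀ : G} (hb : g₀ • a = b) :
    #{g : G | g • a = b} = Nat.card (stabilizer G a) := by
  rw [Nat.card_eq_fintype_card, Fintype.card_subtype]
  refine card_nbij' (g₀⁻¹ * ·) (g₀ * ·) ?_ ?_ (fun g _ => mul_inv_cancel_left g₀ g)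
    (fun g _ => inv_mul_cancel_left g₀ g)
  · intro g hg
    simp_all [mul_smul, inv_smul_eq_iff]
  · intro g hg
    simp_all [mul_smul]

theorem MulAction.sum_smul_eq_card_stabilizer_nsmul {G X M : Type*} [Group G] [MulAction G X]
    [Fintype G] [AddCommMonoid M] (f : X → M) (a : X) :
    ∑ g : G, f (g • a) = Nat.card (stabilizer G a) • ∑ b ∈ univ.image (fun g : G => g • a), f b := by
  rw [sum_comp, smul_sum]
  refine sum_congr rfl fun b hb => ?_
  obtain ⟨g₀, -, hg₀⟩ := mem_image.mp hb
  rw [card_filter_smul_eq hg₀]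

theorem sum_conj_eq_card_centralizer_mul {G R : Type*} [Group G] [Fintype G] [Semiring R]
    (f : G → R) (z : G) :
    ∑ y : G, f (y * z * y⁻¹)
      = Nat.card (Subgroup.centralizer {z}) * ∑ h : G, if IsConj z h then f h else 0 := by
  have horbit : univ.image (fun c : ConjAct G => c • z) = ({h | IsConj z h} : Finset G) := by
    ext h
    simp only [mem_image, mem_univ, true_and, mem_filter, ConjAct.smul_def, isConj_iff]
    exact ConjAct.ofConjAct.surjective.exists
  calc ∑ y : G, f (y * z * y⁻¹)
      = ∑ c : ConjAct G, f (c • z) := (ConjAct.ofConjAct.toEquiv.sum_comp _).symm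
    _ = Nat.card (stabilizer (ConjAct G) z) • ∑ h ∈ univ.image (fun c : ConjAct G => c • z), f h :=
        sum_smul_eq_card_stabilizer_nsmul f z
    _ = _ := by
        rw [horbit, ← Subgroup.nat_card_centralizer_nat_card_stabilizer, nsmul_eq_mul, sum_filter]

theorem sum_mul_sum_conj_eq {G R : Type*} [Group G] [Fintype G] [CommSemiring R] (a f : G → R) :
    ∑ g : G, a g * ∑ y : G, f (y⁻¹ * g * y)
      = ∑ z : G, f z * (Nat.card (Subgroup.centralizer {z}) *
          ∑ h : G, if IsConj z h then a h else 0) := by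
  calc ∑ g : G, a g * ∑ y : G, f (y⁻¹ * g * y)
      = ∑ y : G, ∑ g : G, a g * f (y⁻¹ * g * y) := by simp_rw [mul_sum]; exact sum_comm
    _ = ∑ y : G, ∑ z : G, a (y * z * y⁻¹) * f z := by
        refine sum_congr rfl fun y _ => ?_
        rw [← (MulAut.conj y).toEquiv.sum_comp]
        simp [mul_assoc]
    _ = ∑ z : G, f z * ∑ y : G, a (y * z * y⁻¹) := by
        simp_rw [mul_sum, mul_comm (f _)]; exact sum_comm
    _ = _ := by simp_rw [sum_conj_eq_card_centralizer_mul]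

theorem Subgroup.card_mul_relIndex {G : Type*} [Group G] {H K : Subgroup G} (h : H ≤ K) :
    Nat.card H * H.relIndex K = Nat.card K := by
  simpa only [relIndex_bot_left] using relIndex_mul_relIndex ⊥ H K bot_le h

theorem stmt15_general {G : Type*} [Group G] [Fintype G] (N : Subgroup G)
    (hN : ∀ x ∈ N, ∀ y ∈ N, x * y = y * x) (ψ : ↥N →* ℂˣ)
    (u : MonoidAlgebra ℂ G) :
    ∑ g : G, u.coeff g * ((Nat.card N : ℂ)⁻¹ *
        ∑ y : G, if h : y⁻¹ * g * y ∈ N then ((ψ ⟨y⁻¹ * g * y, h⟩ : ℂˣ) : ℂ) else 0)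
      = ∑ n : ↥N, ((ψ n : ℂˣ) : ℂ) *
          (N.relIndex (Subgroup.centralizer {(n : G)}) : ℂ) *
          ∑ h : G, if IsConj (n : G) h then u.coeff h else 0 := by
  have hN_le_centralizer (n : N) : N ≤ Subgroup.centralizer {(n : G)} := fun m hm =>
    Subgroup.mem_centralizer_singleton_iff.mpr (hN m hm n n.2)
  have hN_card : (Nat.card N : ℂ) ≠ 0 := Nat.cast_ne_zero.mpr Nat.card_pos.ne'
  calc _ = (Nat.card N : ℂ)⁻¹ * ∑ g : G, u.coeff g *
          ∑ y : G, if h : y⁻¹ * g * y ∈ N then ((ψ ⟨y⁻¹ * g * y, h⟩ : ℂˣ) : ℂ) else 0 := by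
        simp_rw [mul_sum, mul_left_comm]
    _ = (Nat.card N : ℂ)⁻¹ * ∑ n : N, ((ψ n : ℂˣ) : ℂ) *
          (Nat.card (Subgroup.centralizer {(n : G)}) *
            ∑ h : G, if IsConj (n : G) h then u.coeff h else 0) := by
        rw [sum_mul_sum_conj_eq u.coeff (fun z => if h : z ∈ N then ((ψ ⟨z, h⟩ : ℂˣ) : ℂ) else 0),
          ← Fintype.sum_dite_eq_sum_subtype (· ∈ N)]
        simp_rw [dite_mul, zero_mul]
    _ = _ := by
        rw [mul_sum]
        refine sum_congr rfl fun n _ => ?_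
        rw [← Subgroup.card_mul_relIndex (hN_le_centralizer n)]
        field_simp
        push_cast
        ring

/-- Let `N` be an abelian normal subgroup of a finite group `G`, `ψ : N → ℂ*` a linear
character, and `ψ^G` the induced character (given by the standard formula
`ψ^G(g) = |N|⁻¹ Σ_{y ∈ G} ψ°(y⁻¹ g y)`), extended linearly to `ℂG`. Then for every
`u ∈ ℂG`:  `ψ^G(u) = Σ_{n ∈ N} ψ(n)·[C_G(n) : N]·ε_n(u)`. -/
theorem stmt15 {G : Type*} [Group G] [Fintype G] (N : Subgroup G) [N.Normal]
    (hN : ∀ x ∈ N, ∀ y ∈ N, x * y = y * x) (ψ : ↥N →* ℂˣ)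
    (u : MonoidAlgebra ℂ G) :
    ∑ g : G, u.coeff g * ((Nat.card N : ℂ)⁻¹ *
        ∑ y : G, if h : y⁻¹ * g * y ∈ N then ((ψ ⟨y⁻¹ * g * y, h⟩ : ℂˣ) : ℂ) else 0)
      = ∑ n : ↥N, ((ψ n : ℂˣ) : ℂ) *
          (N.relIndex (Subgroup.centralizer {(n : G)}) : ℂ) *
          ∑ h : G, if IsConj (n : G) h then u.coeff h else 0 :=
  stmt15_general N hN ψ u
end

section
/- Let U be a complex square matrix with U^m = I, and let α be an m-th root of unity. Then the multiplicity of α as an eigenvalue of U equals (1/m)·Σ_{d | m} Tr_{ℚ(ζ_m^d)/ℚ}( tr(U^d)·α^{−d} ), where tr denotes the matrix trace and Tr_{ℚ(ζ)/ℚ} the field trace of the cyclotomic field. -/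
/-!
The operator `P_β = m⁻¹ ∑_{j<m} β⁻ʲ Uʲ` is the projection onto the `β`-eigenspace of `U`, so
taking traces gives `μ_U(α) = m⁻¹ ∑_{j<m} α⁻ʲ tr(Uʲ)`. The projections `P_{ζᶜ}` sum to `1`, hence
`tr(Uʲ) α⁻ʲ = q(ζʲ)` for a single `q ∈ ℚ[X]`. Sorting the `m`-th roots of unity `ζʲ` by their
order `m / d`, the sum of `q` over the primitive `(m / d)`-th roots of unity is the sum of `q` over
the conjugates of `ζᵈ`, i.e. the trace of `q(ζᵈ)` from `ℚ(ζᵈ)` to `ℚ`.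
-/

open Finset Polynomial IntermediateField Module

theorem geom_sum_eq_ite_of_pow_eq_one {K : Type*} [Field K] [DecidableEq K] {x : K} {n : ℕ}
    (hx : x ^ n = 1) : ∑ i ∈ range n, x ^ i = if x = 1 then (n : K) else 0 := by
  split_ifs with h
  · simp [h]
  · rw [geom_sum_eq h, hx, sub_self, zero_div]

theorem IsPrimitiveRoot.sum_range_inv_pow_pow {K : Type*} [Field K] {ζ : K} {m j : ℕ}
    (hζ : IsPrimitiveRoot ζ m) (hj : j < m) :
    ∑ c ∈ range m, (ζ ^ c)⁻¹ ^ j = if j = 0 then (m : K) else 0 := by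
  classical
  have hpow : ∀ c, (ζ ^ c)⁻¹ ^ j = (ζ ^ j)⁻¹ ^ c := fun c => by
    rw [← inv_pow, ← inv_pow, pow_right_comm]
  have hroot : (ζ ^ j)⁻¹ ^ m = 1 := by
    rw [inv_pow, pow_right_comm, hζ.pow_eq_one, one_pow, inv_one]
  have hone : (ζ ^ j)⁻¹ = 1 ↔ j = 0 := by
    rw [inv_eq_one, hζ.pow_eq_one_iff_dvd]
    exact ⟨fun h => Nat.eq_zero_of_dvd_of_lt h hj, fun h => h ▸ dvd_zero m⟩
  simp only [hpow, geom_sum_eq_ite_of_pow_eq_one hroot, hone]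

theorem IsPrimitiveRoot.sum_range_pow_eq_sum_divisors {R M : Type*} [CommRing R] [IsDomain R]
    [AddCommMonoid M] {ζ : R} {m : ℕ} (hζ : IsPrimitiveRoot ζ m) (f : R → M) :
    ∑ j ∈ range m, f (ζ ^ j) = ∑ d ∈ m.divisors, ∑ η ∈ primitiveRoots (m / d) R, f η := by
  classical
  rcases Nat.eq_zero_or_pos m with rfl | hm
  · simp
  have : NeZero m := ⟨hm.ne'⟩
  rw [Nat.sum_div_divisors m fun i => ∑ η ∈ primitiveRoots i R, f η,
    ← sum_biUnion fun i _ j _ hij => IsPrimitiveRoot.disjoint hij,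
    ← nthRoots_one_eq_biUnion_primitiveRoots]
  refine sum_nbij (ζ ^ ·) (fun j _ => ?_) (fun i hi j hj hij => hζ.pow_inj ?_ ?_ hij)
    (fun η hη => ?_) fun _ _ => rfl
  · exact (Polynomial.mem_nthRootsFinset hm 1).mpr (by rw [pow_right_comm, hζ.pow_eq_one, one_pow])
  · simpa using hi
  · simpa using hj
  · obtain ⟨j, hj, rfl⟩ := hζ.eq_pow_of_pow_eq_one ((Polynomial.mem_nthRootsFinset hm 1).mp hη)
    exact ⟨j, by simpa using hj, rfl⟩

namespace Module.End

variable {K V : Type*} [Field K] [AddCommGroup V] [Module K V]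

noncomputable def eigenProjection (f : Module.End K V) (m : ℕ) (β : K) : Module.End K V :=
  (m : K)⁻¹ • ∑ j ∈ range m, β⁻¹ ^ j • f ^ j

variable {f : Module.End K V} {m : ℕ} {β : K}

theorem mul_eigenProjection (hm : m ≠ 0) (hf : f ^ m = 1) (hβ : β ^ m = 1) :
    f * f.eigenProjection m β = β • f.eigenProjection m β := by
  have hβ0 : β ≠ 0 := ne_zero_pow hm (hβ ▸ one_ne_zero)
  set g : ℕ → Module.End K V := fun j => β⁻¹ ^ j • f ^ j
  have hshift : ∑ j ∈ range m, g (j + 1) = ∑ j ∈ range m, g j := by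
    have hperiod : g m = g 0 := by simp only [g, hf, inv_pow, hβ, inv_one, pow_zero]
    have := (sum_range_succ' g m).symm.trans (sum_range_succ g m)
    rwa [hperiod, add_left_inj] at this
  have hstep : ∀ j, f * g j = β • g (j + 1) := fun j => by
    rw [mul_smul_comm, ← pow_succ', smul_smul, pow_succ' β⁻¹, ← mul_assoc, mul_inv_cancel₀ hβ0,
      one_mul]
  simp only [eigenProjection, mul_smul_comm, mul_sum, hstep, ← smul_sum, hshift, g]
  rw [smul_comm]

theorem isProj_eigenProjection (hm : (m : K) ≠ 0) (hf : f ^ m = 1) (hβ : β ^ m = 1) :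
    LinearMap.IsProj (f.eigenspace β) (f.eigenProjection m β) where
  map_mem x := by
    rw [mem_eigenspace_iff, ← mul_apply,
      mul_eigenProjection (fun h => hm (by simp [h])) hf hβ, LinearMap.smul_apply]
  map_id x hx := by
    have hβ0 : β ≠ 0 := ne_zero_pow (fun h => hm (by simp [h])) (hβ ▸ one_ne_zero)
    have hpow : ∀ j, (f ^ j) x = β ^ j • x := fun j => by
      induction j with
      | zero => simp
      | succ j ih => rw [pow_succ', mul_apply, ih, map_smul, mem_eigenspace_iff.mp hx,
          smul_smul, pow_succ]
    simp [eigenProjection, hpow, smul_smul, hβ0, ← Nat.cast_smul_eq_nsmul K, hm]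

theorem sum_eigenProjection {ζ : K} (hζ : IsPrimitiveRoot ζ m) (hm : (m : K) ≠ 0) :
    ∑ c ∈ range m, f.eigenProjection m (ζ ^ c) = 1 := by
  have hm0 : 0 < m := Nat.pos_of_ne_zero fun h => hm (by simp [h])
  simp only [eigenProjection, ← smul_sum]
  rw [sum_comm]
  simp only [← sum_smul]
  rw [sum_congr rfl fun j hj => by rw [hζ.sum_range_inv_pow_pow (mem_range.mp hj)],
    sum_eq_single_of_mem 0 (mem_range.mpr hm0) fun j _ hj => by simp [hj]]
  simp [hm]

variable [FiniteDimensional K V]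

theorem finrank_eigenspace_eq (hm : (m : K) ≠ 0) (hf : f ^ m = 1) (hβ : β ^ m = 1) :
    (finrank K (f.eigenspace β) : K) =
      (m : K)⁻¹ * ∑ j ∈ range m, β⁻¹ ^ j * LinearMap.trace K V (f ^ j) := by
  rw [← (isProj_eigenProjection hm hf hβ).trace, eigenProjection]
  simp [map_sum]

theorem trace_pow_eq_sum_finrank_eigenspace {ζ : K} (hζ : IsPrimitiveRoot ζ m)
    (hm : (m : K) ≠ 0) (hf : f ^ m = 1) (j : ℕ) :
    LinearMap.trace K V (f ^ j) =
      ∑ c ∈ range m, (finrank K (f.eigenspace (ζ ^ c)) : K) * (ζ ^ c) ^ j := by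
  have hroot : ∀ c, (ζ ^ c) ^ m = 1 := fun c => by rw [pow_right_comm, hζ.pow_eq_one, one_pow]
  have hpow : ∀ c, f ^ j * f.eigenProjection m (ζ ^ c) =
      (ζ ^ c) ^ j • f.eigenProjection m (ζ ^ c) := fun c => by
    induction j with
    | zero => simp
    | succ j ih => rw [pow_succ, mul_assoc, mul_eigenProjection (fun h => hm (by simp [h])) hf
        (hroot c), mul_smul_comm, ih, smul_smul, pow_succ']
  calc LinearMap.trace K V (f ^ j)
      = ∑ c ∈ range m, LinearMap.trace K V (f ^ j * f.eigenProjection m (ζ ^ c)) := by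
        rw [← map_sum, ← mul_sum, sum_eigenProjection hζ hm, mul_one]
    _ = _ := by
        refine sum_congr rfl fun c _ => ?_
        rw [hpow, map_smul, (isProj_eigenProjection hm hf (hroot c)).trace, smul_eq_mul, mul_comm]

theorem exists_aeval_eq_inv_pow_mul_trace_pow [CharZero K] {ζ : K} (hζ : IsPrimitiveRoot ζ m)
    (hm : (m : K) ≠ 0) (hf : f ^ m = 1) (hβ : β ^ m = 1) :
    ∃ q : ℚ[X], ∀ j, β⁻¹ ^ j * LinearMap.trace K V (f ^ j) = aeval (ζ ^ j) q := by
  have : NeZero m := ⟨fun h => hm (by simp [h])⟩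
  obtain ⟨c₀, -, hc₀⟩ := hζ.eq_pow_of_pow_eq_one (ξ := β⁻¹) (by rw [inv_pow, hβ, inv_one])
  refine ⟨X ^ c₀ * ∑ c ∈ range m, C (finrank K (f.eigenspace (ζ ^ c)) : ℚ) * X ^ c, fun j => ?_⟩
  simp only [trace_pow_eq_sum_finrank_eigenspace hζ hm hf, ← hc₀, map_mul, map_pow, aeval_X,
    map_sum, aeval_C, eq_ratCast, Rat.cast_natCast, pow_right_comm ζ _ j]

end Module.End

theorem IsPrimitiveRoot.algebraMap_trace_aeval {n : ℕ} [NeZero n] {K L E : Type*} [Field K]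
    [Field L] [Field E] [Algebra K L] [Algebra K E] [IsAlgClosed E]
    [IsCyclotomicExtension {n} K L] {ζ : L} (hζ : IsPrimitiveRoot ζ n)
    (hirr : Irreducible (cyclotomic n K)) (q : K[X]) :
    algebraMap K E (Algebra.trace K L (aeval ζ q)) = ∑ η ∈ primitiveRoots n E, aeval η q := by
  have := IsCyclotomicExtension.finiteDimensional {n} K L
  have := IsCyclotomicExtension.isSeparable {n} K L
  rw [trace_eq_sum_embeddings, ← sum_coe_sort (primitiveRoots n E)]
  exact Fintype.sum_equiv (hζ.embeddingsEquivPrimitiveRoots E hirr) _ _ fun σ => by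
    rw [← aeval_algHom_apply, embeddingsEquivPrimitiveRoots_apply_coe]

theorem IsPrimitiveRoot.isCyclotomicExtension_adjoin_simple {K L : Type*} [Field K] [Field L]
    [Algebra K L] {n : ℕ} [NeZero n] {ζ : L} (hζ : IsPrimitiveRoot ζ n) :
    IsCyclotomicExtension {n} K K⟮ζ⟯ := by
  change IsCyclotomicExtension {n} K K⟮ζ⟯.toSubalgebra
  rw [adjoin_simple_toSubalgebra_of_isAlgebraic
    (hζ.isIntegral (NeZero.pos n)).tower_top.isAlgebraic]
  exact hζ.adjoin_isCyclotomicExtension K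

theorem IsPrimitiveRoot.algebraMap_trace_aeval_adjoinSimpleGen {K E : Type*} [Field K] [Field E]
    [Algebra K E] [IsAlgClosed E] {n : ℕ} [NeZero n] {ξ : E} (hξ : IsPrimitiveRoot ξ n)
    (hirr : Irreducible (cyclotomic n K)) (q : K[X]) :
    algebraMap K E (Algebra.trace K K⟮ξ⟯ (aeval (AdjoinSimple.gen K ξ) q)) =
      ∑ η ∈ primitiveRoots n E, aeval η q :=
  have := hξ.isCyclotomicExtension_adjoin_simple (K := K)
  (hξ.of_map_of_injective (f := K⟮ξ⟯.val) Subtype.val_injective).algebraMap_trace_aeval hirr q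

/-- Luthar–Passi multiplicity formula: if `U^m = I` and `α` is an `m`-th root of unity,
then the multiplicity of `α` as an eigenvalue of `U` equals
`(1/m)·Σ_{d ∣ m} Tr_{ℚ(ζ_m^d)/ℚ}(tr(U^d)·α^{−d})`. Here the element
`tr(U^d)·α^{−d}` of `ℚ(ζ_m^d)` is represented by `t d`. -/
theorem stmt17 (m k : ℕ) (hm : 0 < m) (U : Matrix (Fin k) (Fin k) ℂ) (hU : U ^ m = 1)
    (α ζ : ℂ) (hα : α ^ m = 1) (hζ : IsPrimitiveRoot ζ m)
    (t : ∀ d : ℕ, ↥(IntermediateField.adjoin ℚ ({ζ ^ d} : Set ℂ)))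
    (ht : ∀ d : ℕ, ((t d : ℂ)) = (U ^ d).trace * (α⁻¹) ^ d) :
    (Module.finrank ℂ (Module.End.eigenspace (Matrix.toLin' U) α) : ℚ)
      = (1 / m) * ∑ d ∈ m.divisors,
          Algebra.trace ℚ (IntermediateField.adjoin ℚ ({ζ ^ d} : Set ℂ)) (t d) := by
  have hm' : (m : ℂ) ≠ 0 := by exact_mod_cast hm.ne'
  set f : Module.End ℂ (Fin k → ℂ) := Matrix.toLin' U
  have hf : f ^ m = 1 := by rw [← Matrix.toLin'_pow, hU, Matrix.toLin'_one]; rfl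
  obtain ⟨q, hq⟩ := End.exists_aeval_eq_inv_pow_mul_trace_pow hζ hm' hf hα
  have ht' : ∀ d, t d = aeval (AdjoinSimple.gen ℚ (ζ ^ d)) q := fun d => by
    refine Subtype.ext ((ht d).trans (Eq.trans ?_ (AdjoinSimple.coe_aeval_gen_apply ℚ _ q).symm))
    rw [← hq, ← Matrix.toLin'_pow, Matrix.trace_toLin'_eq, mul_comm]
  apply Rat.cast_injective (α := ℂ)
  rw [Rat.cast_natCast, End.finrank_eigenspace_eq hm' hf hα, Rat.cast_mul, Rat.cast_sum, one_div,
    Rat.cast_inv, Rat.cast_natCast]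
  congr 1
  calc ∑ j ∈ range m, α⁻¹ ^ j * LinearMap.trace ℂ _ (f ^ j)
      = ∑ d ∈ m.divisors, ∑ η ∈ primitiveRoots (m / d) ℂ, aeval η q := by
        simp only [hq]
        exact hζ.sum_range_pow_eq_sum_divisors fun η => aeval η q
    _ = ∑ d ∈ m.divisors, (Algebra.trace ℚ ℚ⟮ζ ^ d⟯ (t d) : ℂ) := sum_congr rfl fun d hd => by
        obtain ⟨hdm, -⟩ := Nat.mem_divisors.mp hd
        have : NeZero (m / d) :=
          ⟨Nat.div_ne_zero_iff_of_dvd hdm |>.mpr ⟨hm.ne', ne_zero_of_dvd_ne_zero hm.ne' hdm⟩⟩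
        rw [ht' d, ← eq_ratCast (algebraMap ℚ ℂ)]
        exact ((hζ.pow hm (Nat.mul_div_cancel' hdm).symm).algebraMap_trace_aeval_adjoinSimpleGen
          (cyclotomic.irreducible_rat (NeZero.pos _)) q).symm
end

section
/- Let G be a finite group, N ⊴ G with k = [G : N], and ρ_N : RG → M_k(RN) the matrix representation of left multiplication on RG viewed as a free right RN-module with basis a transversal of N in G. Then for every r ∈ RG and x ∈ N: ε_x^N(tr(ρ_N(r))) = [C_G(x) : C_N(x)]·ε_x^G(r). -/
/-!
Write `s = sec` and `C = C_G(x)`. The left side is the sum of `r` over the values of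
`(n, q) ↦ s q * n * (s q)⁻¹` on the pairs with `n` conjugate to `x` in `N`. Every value is
`G`-conjugate to `x`, and the fibre over `h = g₀ * x * g₀⁻¹` is mapped injectively by
`(n, q) ↦ q` onto the image of the coset `g₀ • C` in `G ⧸ N`. That image has
`|C N / N| = [C : C ∩ N]` elements, which is `N.relIndex C`.
-/

open scoped Classical

open Finset QuotientGroup Pointwise

theorem Finset.sum_comp_eq_sum_card_nsmul {ι κ M : Type*} [AddCommMonoid M] [Fintype κ]
    [DecidableEq κ] (s : Finset ι) (f : κ → M) (g : ι → κ) :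
    ∑ a ∈ s, f (g a) = ∑ b, #{a ∈ s | g a = b} • f b := by
  rw [sum_comp]
  refine sum_subset (subset_univ _) fun b _ hb => ?_
  have hfiber : #{a ∈ s | g a = b} = 0 := card_eq_zero.mpr <| filter_eq_empty_iff.mpr
    fun a ha (hab : g a = b) => hb (hab ▸ mem_image_of_mem g ha)
  rw [hfiber, zero_smul]

namespace Subgroup

variable {G : Type*} [Group G]

theorem setOf_conj_eq_smul_centralizer (x g₀ : G) :
    {g : G | g * x * g⁻¹ = g₀ * x * g₀⁻¹} = g₀ • (centralizer {x} : Set G) := by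
  ext g
  rw [Set.mem_ofPred_eq, mem_leftCoset_iff, SetLike.mem_coe, mem_centralizer_singleton_iff]
  constructor <;> intro h
  · calc g₀⁻¹ * g * x = g₀⁻¹ * (g * x * g⁻¹) * g := by group
      _ = x * (g₀⁻¹ * g) := by rw [h]; group
  · calc g * x * g⁻¹ = g₀ * (g₀⁻¹ * g * x) * g⁻¹ := by group
      _ = g₀ * x * g₀⁻¹ := by rw [h]; group

theorem ncard_image_mk_smul (N H : Subgroup G) [N.Normal] (g : G) :
    ((QuotientGroup.mk : G → G ⧸ N) '' (g • (H : Set G))).ncard = N.relIndex H := by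
  rw [← QuotientGroup.coe_mk', Set.image_smul_distrib, Set.ncard_smul_set, ← coe_map,
    ← Nat.card_coe_set_eq]
  conv_rhs => rw [← ker_mk' N, relIndex_ker]
  rfl

theorem ncard_image_mk_setOf_conj (N : Subgroup G) [N.Normal] (x h : G) :
    ((QuotientGroup.mk : G → G ⧸ N) '' {g | g * x * g⁻¹ = h}).ncard =
      if IsConj x h then N.relIndex (centralizer {x}) else 0 := by
  split_ifs with hxh
  · obtain ⟨g₀, rfl⟩ := isConj_iff.mp hxh
    rw [setOf_conj_eq_smul_centralizer, ncard_image_mk_smul]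
  · have hempty : {g | g * x * g⁻¹ = h} = ∅ :=
      Set.eq_empty_of_forall_notMem fun g hg => hxh (isConj_iff.mpr ⟨g, hg⟩)
    simp [hempty]

end Subgroup

section Transversal

variable {G : Type*} [Group G] {N : Subgroup G} {sec : G ⧸ N → G} {x : G}

theorem injOn_snd_setOf_conj_eq (h : G) :
    Set.InjOn Prod.snd {p : N × G ⧸ N | sec p.2 * p.1 * (sec p.2)⁻¹ = h} := by
  rintro ⟨n, q⟩ hn ⟨n', q'⟩ hn' (rfl : q = q')
  have hnn' : (n : G) = n' := mul_left_cancel (mul_right_cancel (hn.trans hn'.symm))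
  rw [Subtype.ext hnn']

theorem image_snd_setOf_isConj_transversal (hsec : ∀ q, (sec q : G ⧸ N) = q) (hx : x ∈ N)
    (h : G) :
    Prod.snd ''
        {p : N × G ⧸ N | IsConj (⟨x, hx⟩ : N) p.1 ∧ sec p.2 * p.1 * (sec p.2)⁻¹ = h}
      = (QuotientGroup.mk : G → G ⧸ N) '' {g | g * x * g⁻¹ = h} := by
  ext q
  constructor
  · rintro ⟨⟨n, q⟩, ⟨hn, rfl⟩, rfl⟩
    obtain ⟨m, rfl⟩ := isConj_iff.mp hn
    refine ⟨sec q * m, ?_, by rw [mk_mul_of_mem _ m.2, hsec]⟩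
    simp only [Set.mem_ofPred_eq, Subgroup.coe_mul, Subgroup.coe_inv]
    group
  · rintro ⟨g, rfl, rfl⟩
    have hm : (sec g)⁻¹ * g ∈ N := by rw [← QuotientGroup.eq, hsec]
    refine ⟨(⟨_, hm⟩ * ⟨x, hx⟩ * ⟨_, hm⟩⁻¹, g), ⟨isConj_iff.mpr ⟨_, rfl⟩, ?_⟩, rfl⟩
    simp only [Subgroup.coe_mul, Subgroup.coe_inv]
    group

theorem ncard_setOf_isConj_transversal [N.Normal] (hsec : ∀ q, (sec q : G ⧸ N) = q)
    (hx : x ∈ N) (h : G) :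
    {p : N × G ⧸ N | IsConj (⟨x, hx⟩ : N) p.1 ∧ sec p.2 * p.1 * (sec p.2)⁻¹ = h}.ncard
      = if IsConj x h then N.relIndex (Subgroup.centralizer {x}) else 0 := by
  rw [← ((injOn_snd_setOf_conj_eq h).mono fun _ hp => hp.2).ncard_image,
    image_snd_setOf_isConj_transversal hsec hx, Subgroup.ncard_image_mk_setOf_conj]

end Transversal

/-- Let `N ⊴ G` with transversal given by a section `sec : G/N → G`, and let
`ρ_N : RG → M_k(RN)` be the matrix representation of left multiplication on `RG` viewed as
a free right `RN`-module on the transversal (its `(q,q')` entry has coefficient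
`r(sec q · n · (sec q')⁻¹)` at `n ∈ N`). Then for `r ∈ RG` and `x ∈ N`:
`ε_x^N(tr(ρ_N(r))) = [C_G(x) : C_N(x)]·ε_x^G(r)`. -/
theorem stmt18 {R : Type*} [CommRing R] {G : Type*} [Group G] [Fintype G]
    (N : Subgroup G) [N.Normal] (sec : G ⧸ N → G)
    (hsec : ∀ q : G ⧸ N, (QuotientGroup.mk (sec q) : G ⧸ N) = q)
    (r : MonoidAlgebra R G) (x : G) (hx : x ∈ N) :
    (∑ n : ↥N, if IsConj (⟨x, hx⟩ : ↥N) n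
        then ∑ q : G ⧸ N, r.coeff (sec q * (n : G) * (sec q)⁻¹) else 0)
      = (N.relIndex (Subgroup.centralizer {x}) : R) *
          ∑ h : G, if IsConj x h then r.coeff h else 0 := by
  set S : Finset (N × G ⧸ N) := {p | IsConj (⟨x, hx⟩ : N) p.1}
  have hfiber (h : G) : #{p ∈ S | sec p.2 * p.1 * (sec p.2)⁻¹ = h} =
      {p : N × G ⧸ N | IsConj (⟨x, hx⟩ : N) p.1 ∧ sec p.2 * p.1 * (sec p.2)⁻¹ = h}.ncard := by
    rw [← Set.ncard_coe_finset, filter_filter, coe_filter]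
    simp
  calc _ = ∑ p ∈ S, r.coeff (sec p.2 * p.1 * (sec p.2)⁻¹) := by
        rw [sum_filter, Fintype.sum_prod_type]
        simp only [ite_sum_zero]
    _ = ∑ h, #{p ∈ S | sec p.2 * p.1 * (sec p.2)⁻¹ = h} • r.coeff h :=
        sum_comp_eq_sum_card_nsmul S r.coeff _
    _ = _ := by
        simp only [hfiber, ncard_setOf_isConj_transversal hsec hx, mul_sum, ite_smul, zero_smul,
          nsmul_eq_mul, mul_ite, mul_zero]
end
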